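/- arXiv:2505.17725 — 2 statements merged into one kernel-verified Lean document; each statement's English description precedes it below -/
import Mathlib

section
/- Let σ, τ be weight functions in the class W₀ with associated weight matrices {S^(ℓ) : ℓ > 0} and {T^(ℓ) : ℓ > 0}, and assume γ̄(σ) < +∞ and γ̄(τ) < +∞. Then for all ℓ, ℓ₁, j, j₁ > 0 one has γ̄(ω_{S^(ℓ)} ⋆̌ ω_{T^(j)}) = γ̄(σ⋆̌τ) ≤ γ̄(σ) + γ̄(τ) = γ̄(ω_{S^(ℓ₁)}) + γ̄(ω_{T^(j₁)}). -/
open Real Filter Asymptotics Set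
open scoped ENNReal Topology

noncomputable section

/-- A weight function: nonnegative, non-decreasing on `[0,∞)`, tending to `+∞`. -/
def IsWeightFct (ω : ℝ → ℝ) : Prop :=
  (∀ t : ℝ, 0 ≤ ω t) ∧ MonotoneOn ω (Ici (0:ℝ)) ∧ Tendsto ω atTop atTop

/-- Condition `(ω₁)`: `ω(2t) = O(ω(t))`. -/
def HasOm1 (ω : ℝ → ℝ) : Prop :=
  ∃ L : ℝ, 1 ≤ L ∧ ∀ t : ℝ, 0 ≤ t → ω (2 * t) ≤ L * (ω t + 1)

/-- Condition `(ω₆)`. -/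
def HasOm6 (ω : ℝ → ℝ) : Prop :=
  ∃ H : ℝ, 1 ≤ H ∧ ∀ t : ℝ, 0 ≤ t → 2 * ω t ≤ ω (H * t) + H

/-- The class `W₀` of (normalized) Braun-Meise-Taylor weight functions. -/
def IsW0 (ω : ℝ → ℝ) : Prop :=
  IsWeightFct ω ∧ ContinuousOn ω (Ici (0:ℝ)) ∧ (∀ t ∈ Icc (0:ℝ) 1, ω t = 0) ∧
    ((fun t : ℝ => Real.log t) =o[atTop] ω) ∧
    ConvexOn ℝ univ (fun y : ℝ => ω (Real.exp y))

/-- Legendre-Fenchel-Young conjugate `φ*_ω`. -/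
def phiStar (ω : ℝ → ℝ) (x : ℝ) : ℝ :=
  sSup {z : ℝ | ∃ y : ℝ, 0 ≤ y ∧ z = x * y - ω (Real.exp y)}

/-- The sequence `W^(ℓ)` of the associated weight matrix of `ω`. -/
def assocSeq (ω : ℝ → ℝ) (ℓ : ℝ) (p : ℕ) : ℝ :=
  Real.exp ((1 / ℓ) * phiStar ω (ℓ * (p : ℝ)))

/-- The weight function `ω_M` associated with a sequence `M`. -/
def omegaSeq (M : ℕ → ℝ) (t : ℝ) : ℝ :=
  sSup {z : ℝ | ∃ p : ℕ, z = Real.log (t ^ p / M p)}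

/-- Property `(P_{ω,γ})`. -/
def gammaProp (ω : ℝ → ℝ) (g : ℝ) : Prop :=
  ∃ K : ℝ, 1 < K ∧
    limsup (fun t : ℝ => ((ω (K ^ g * t) / ω t : ℝ) : EReal)) atTop < (K : EReal)

/-- Property `(P̄_{ω,γ})`. -/
def gammaBarProp (ω : ℝ → ℝ) (g : ℝ) : Prop :=
  ∃ A : ℝ, 1 < A ∧
    (A : EReal) < liminf (fun t : ℝ => ((ω (A ^ g * t) / ω t : ℝ) : EReal)) atTop

/-- The growth index `γ(ω) ∈ [0,∞]`. -/
def gammaIdx (ω : ℝ → ℝ) : ℝ≥0∞ :=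
  ⨆ (g : ℝ) (_ : 0 < g ∧ gammaProp ω g), ENNReal.ofReal g

/-- The growth index `γ̄(ω) ∈ [0,∞]` (`+∞` if no admissible `γ` exists). -/
def gammaBarIdx (ω : ℝ → ℝ) : ℝ≥0∞ :=
  sInf (ENNReal.ofReal '' {g : ℝ | 0 < g ∧ gammaBarProp ω g})

/-- Generalized lower Legendre conjugate `σ ⋆̌ τ`. -/
def lowerConj (σ τ : ℝ → ℝ) (t : ℝ) : ℝ :=
  sInf {z : ℝ | ∃ s : ℝ, 0 < s ∧ z = σ s + τ (t / s)}

/-- Generalized upper Legendre conjugate `σ ⋆̂ τ`. -/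
def upperConj (σ τ : ℝ → ℝ) (t : ℝ) : ℝ :=
  if t = 0 then σ 0 - τ 0 else sSup {z : ℝ | ∃ s : ℝ, 0 ≤ s ∧ z = σ s - τ (s / t)}

/-- `σ ⋆̂ τ` is well-defined, i.e. `σ⋆̂τ(t) < +∞` for every `t`. -/
def UpperConjWD (σ τ : ℝ → ℝ) : Prop :=
  ∀ t : ℝ, 0 < t → BddAbove {z : ℝ | ∃ s : ℝ, 0 ≤ s ∧ z = σ s - τ (s / t)}

/-- Lower Legendre envelope `h_⋆`. -/
def lowerEnv (h : ℝ → ℝ) (t : ℝ) : ℝ :=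
  sInf {z : ℝ | ∃ u : ℝ, 0 < u ∧ z = h u + t * u}

/-- Upper Legendre envelope `h^⋆`. -/
def upperEnv (h : ℝ → ℝ) (t : ℝ) : ℝ :=
  sSup {z : ℝ | ∃ s : ℝ, 0 ≤ s ∧ z = h s - t * s}

/-- `(((ω^ι)^α)_⋆)^{1/α}` (which equals `ω ⋆̌ id^{1/α}`). -/
def lowerCompose (ω : ℝ → ℝ) (α : ℝ) (t : ℝ) : ℝ :=
  lowerEnv (fun u : ℝ => ω (1 / u ^ α)) (t ^ (1 / α))

/-- `(((ω^α)^⋆)^ι)^{1/α}` (which equals `ω ⋆̂ id^{1/α}`). -/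
def upperCompose (ω : ℝ → ℝ) (α : ℝ) (t : ℝ) : ℝ :=
  upperEnv (fun s : ℝ => ω (s ^ α)) (1 / t ^ (1 / α))

/-- Equivalence `σ ∼ τ` of weight functions. -/
def WeightEquiv (σ τ : ℝ → ℝ) : Prop :=
  σ =O[atTop] τ ∧ τ =O[atTop] σ

/-- Relation `M ≼ N` for sequences: `sup_{p ≥ 1} (M_p/N_p)^{1/p} < ∞`. -/
def seqPrec (M N : ℕ → ℝ) : Prop :=
  ∃ C : ℝ, ∀ p : ℕ, 1 ≤ p → (M p / N p) ^ (1 / (p : ℝ)) ≤ C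

/-- Relation `M ◁ N` for sequences: `(M_p/N_p)^{1/p} → 0`. -/
def seqTriangle (M N : ℕ → ℝ) : Prop :=
  Tendsto (fun p : ℕ => (M p / N p) ^ (1 / (p : ℝ))) atTop (𝓝 0)

/-- Equivalence `M ≈ N` of sequences. -/
def seqEquiv (M N : ℕ → ℝ) : Prop := seqPrec M N ∧ seqPrec N M

/-- The Gevrey sequence `G^α`. -/
def gevrey (α : ℝ) (p : ℕ) : ℝ := (p.factorial : ℝ) ^ α

/-- The quotient sequence `μ_p = M_p / M_{p-1}`, `μ₀ = 1`. -/
def quotSeq (M : ℕ → ℝ) : ℕ → ℝ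
  | 0 => 1
  | (p + 1) => M (p + 1) / M p

/-- Condition `(β,Q)`: `liminf_{p} μ_{Qp}/μ_p > Q^β`. -/
def condBQ (M : ℕ → ℝ) (β : ℝ) (Q : ℕ) : Prop :=
  ((((Q : ℝ) ^ β : ℝ)) : EReal) <
    liminf (fun p : ℕ => ((quotSeq M (Q * p) / quotSeq M p : ℝ) : EReal)) atTop

/-- Thilliez's growth index `γ(M) ∈ [0,∞]`. -/
def thilliezIdx (M : ℕ → ℝ) : ℝ≥0∞ :=
  ⨆ (β : ℝ) (_ : 0 ≤ β ∧ ∃ Q : ℕ, 2 ≤ Q ∧ condBQ M β Q), ENNReal.ofReal β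

/-- The Beurling Gelfand-Shilov space `S_(σ)(ℝ)` (membership predicate). -/
def MemSBeurling (σ : ℝ → ℝ) (f : ℝ → ℂ) : Prop :=
  ContDiff ℝ (⊤ : ℕ∞) f ∧ ∀ ℓ : ℝ, 0 < ℓ → ∃ C : ℝ, ∀ x : ℝ, ∀ j k : ℕ,
    (1 + |x|) ^ k * ‖iteratedDeriv j f x‖ ≤ C * assocSeq σ ℓ (j + k)

/-- The polynomial `ψ(x) = x² + 1/4`. -/
def psiMap (x : ℝ) : ℝ := x ^ 2 + 1 / 4

/-- The resolvent operator `R_μ = ∑_m C_{ψ_m}/μ^{m+1}`. -/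
def Rres (μ : ℂ) (f : ℝ → ℂ) (x : ℝ) : ℂ :=
  ∑' m : ℕ, (μ ^ (m + 1))⁻¹ * f (psiMap^[m] x)

namespace Stmt1Aux

def P (ω : ℝ → ℝ) (g : ℝ) : Prop :=
  ∃ A c : ℝ, 1 < A ∧ A < c ∧ ∀ᶠ t : ℝ in atTop, c * ω t ≤ ω (A ^ g * t)

lemma gammaBarProp_iff_P {ω : ℝ → ℝ} (hpos : ∀ᶠ t : ℝ in atTop, 0 < ω t) (g : ℝ) :
    gammaBarProp ω g ↔ P ω g := by
  constructor
  · rintro ⟨A, hA, hlim⟩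
    obtain ⟨z, hz1, hz2⟩ := exists_between hlim
    have hzbot : z ≠ ⊥ := ((EReal.bot_lt_coe A).trans hz1).ne'
    have hztop : z ≠ ⊤ := (hz2.trans_le le_top).ne
    set c := z.toReal with hc
    have hzc : (c : EReal) = z := EReal.coe_toReal hztop hzbot
    have hAc : A < c := by
      have := hz1; rw [← hzc] at this; exact_mod_cast this
    have hev := Filter.eventually_lt_of_lt_liminf hz2
    refine ⟨A, c, hA, hAc, ?_⟩
    filter_upwards [hev, hpos] with t h1 h2
    rw [← hzc] at h1
    have h3 : c < ω (A ^ g * t) / ω t := by exact_mod_cast h1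
    calc c * ω t ≤ (ω (A ^ g * t) / ω t) * ω t :=
          mul_le_mul_of_nonneg_right h3.le h2.le
      _ = ω (A ^ g * t) := by field_simp
  · rintro ⟨A, c, hA, hAc, hev⟩
    refine ⟨A, hA, lt_of_lt_of_le (by exact_mod_cast hAc : (A:EReal) < (c:EReal)) ?_⟩
    apply Filter.le_liminf_of_le (by isBoundedDefault)
    filter_upwards [hev, hpos] with t h1 h2
    have : c ≤ ω (A ^ g * t) / ω t := (le_div_iff₀ h2).mpr h1
    exact_mod_cast this

lemma gammaBarIdx_congr {σ' ω : ℝ → ℝ} (h1 : ∀ᶠ t : ℝ in atTop, 0 < σ' t)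
    (h2 : ∀ᶠ t : ℝ in atTop, 0 < ω t)
    (h : ∀ g : ℝ, 0 < g → (P σ' g ↔ P ω g)) : gammaBarIdx σ' = gammaBarIdx ω := by
  have hs : {g : ℝ | 0 < g ∧ gammaBarProp σ' g} = {g : ℝ | 0 < g ∧ gammaBarProp ω g} := by
    ext g
    simp only [mem_setOf_eq]
    constructor
    · rintro ⟨hg, hp⟩
      exact ⟨hg, (gammaBarProp_iff_P h2 g).mpr ((h g hg).mp ((gammaBarProp_iff_P h1 g).mp hp))⟩
    · rintro ⟨hg, hp⟩
      exact ⟨hg, (gammaBarProp_iff_P h1 g).mpr ((h g hg).mpr ((gammaBarProp_iff_P h2 g).mp hp))⟩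
  rw [gammaBarIdx, gammaBarIdx, hs]

lemma upgrade {ω : ℝ → ℝ} (hmono : ∀ a b : ℝ, 0 < a → a ≤ b → ω a ≤ ω b)
    (hnn : ∀ t : ℝ, 0 < t → 0 ≤ ω t) {g A c : ℝ} (hg : 0 < g) (hA : 1 < A) (hc : A < c)
    (hev : ∀ᶠ t : ℝ in atTop, c * ω t ≤ ω (A ^ g * t)) :
    ∃ θ : ℝ, 1 < θ ∧ ∃ B₀ : ℝ, 1 < B₀ ∧ ∀ B : ℝ, B₀ ≤ B →
      ∀ᶠ t : ℝ in atTop, B ^ θ * ω t ≤ ω (B ^ g * t) := by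
  have hA0 : (0:ℝ) < A := lt_trans one_pos hA
  have hc1 : (1:ℝ) < c := hA.trans hc
  have hc0 : (0:ℝ) < c := lt_trans one_pos hc1
  have hlA : 0 < Real.log A := Real.log_pos hA
  have hlAc : Real.log A < Real.log c := Real.log_lt_log hA0 hc
  -- iterate
  have iter : ∀ k : ℕ, ∀ᶠ t : ℝ in atTop, c ^ k * ω t ≤ ω (A ^ ((k:ℝ) * g) * t) := by
    intro k
    induction k with
    | zero => filter_upwards with t; simp
    | succ k ih =>
      have hmap : Tendsto (fun t : ℝ => A ^ ((k:ℝ) * g) * t) atTop atTop :=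
        Tendsto.const_mul_atTop (rpow_pos_of_pos hA0 _) tendsto_id
      have h2 := hmap.eventually hev
      filter_upwards [ih, h2] with t h1 h2
      have e1 : c ^ (k+1) * ω t = c * (c ^ k * ω t) := by ring
      have e2 : A ^ g * (A ^ ((k:ℝ) * g) * t) = A ^ (((k+1:ℕ):ℝ) * g) * t := by
        rw [← mul_assoc, ← Real.rpow_add hA0]; push_cast; ring_nf
      calc c ^ (k+1) * ω t = c * (c ^ k * ω t) := e1
        _ ≤ c * ω (A ^ ((k:ℝ) * g) * t) := mul_le_mul_of_nonneg_left h1 hc0.le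
        _ ≤ ω (A ^ g * (A ^ ((k:ℝ) * g) * t)) := h2
        _ = ω (A ^ (((k+1:ℕ):ℝ) * g) * t) := by rw [e2]
  set θ : ℝ := (Real.log A + Real.log c) / (2 * Real.log A) with hθdef
  have hθ1 : 1 < θ := by
    rw [hθdef, lt_div_iff₀ (by linarith)]; linarith
  have hθ0 : 0 < θ := lt_trans one_pos hθ1
  set k₀ : ℕ := max 1 ⌈(Real.log A + Real.log c) / (Real.log c - Real.log A)⌉₊ with hk₀
  have hk₀1 : 1 ≤ k₀ := le_max_left _ _
  refine ⟨θ, hθ1, A ^ k₀, one_lt_pow₀ hA (by omega), ?_⟩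
  intro B hB
  have hB1 : 1 < B := lt_of_lt_of_le (one_lt_pow₀ hA (by omega)) hB
  have hB0 : (0:ℝ) < B := lt_trans one_pos hB1
  have hlB : 0 < Real.log B := Real.log_pos hB1
  have hlogB : (k₀ : ℝ) * Real.log A ≤ Real.log B := by
    have h := Real.log_le_log (pow_pos hA0 k₀) hB
    rw [Real.log_pow] at h
    exact_mod_cast h
  set k : ℕ := ⌊Real.log B / Real.log A⌋₊ with hk
  have hdivnn : 0 ≤ Real.log B / Real.log A := by positivity
  have hkk₀ : k₀ ≤ k := by
    apply Nat.le_floor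
    rw [le_div_iff₀ hlA]
    exact hlogB
  have hk1 : 1 ≤ k := le_trans hk₀1 hkk₀
  have hAkB : A ^ k ≤ B := by
    have h1 : (k:ℝ) * Real.log A ≤ Real.log B := by
      have := Nat.floor_le hdivnn
      rw [le_div_iff₀ hlA] at this
      linarith [this]
    have := Real.log_le_log_iff (pow_pos hA0 k) hB0
    rw [← this, Real.log_pow]
    exact h1
  have hBAk1 : Real.log B < ((k:ℝ)+1) * Real.log A := by
    have := Nat.lt_floor_add_one (Real.log B / Real.log A)
    rw [div_lt_iff₀ hlA] at this
    push_cast at this ⊢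
    linarith
  -- θ * log B ≤ k * log c
  have hkey : θ * Real.log B ≤ (k:ℝ) * Real.log c := by
    have h1 : θ * Real.log B ≤ θ * (((k:ℝ)+1) * Real.log A) :=
      mul_le_mul_of_nonneg_left hBAk1.le hθ0.le
    have h2 : θ * (((k:ℝ)+1) * Real.log A) = ((k:ℝ)+1) * (Real.log A + Real.log c) / 2 := by
      have hθ2 : θ * (2 * Real.log A) = Real.log A + Real.log c := by
        rw [hθdef]; exact div_mul_cancel₀ _ (ne_of_gt (by linarith))
      linear_combination (((k:ℝ)+1)/2) * hθ2
    have h3 : ((k:ℝ)+1) * (Real.log A + Real.log c) / 2 ≤ (k:ℝ) * Real.log c := by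
      -- ⇔ (k+1)(logA+logc) ≤ 2k logc ⇔ (logA+logc) ≤ k(logc − logA)
      have hkc : (Real.log A + Real.log c) / (Real.log c - Real.log A) ≤ (k:ℝ) := by
        calc (Real.log A + Real.log c) / (Real.log c - Real.log A)
            ≤ (⌈(Real.log A + Real.log c) / (Real.log c - Real.log A)⌉₊ : ℝ) :=
              Nat.le_ceil _
          _ ≤ (k₀ : ℝ) := by exact_mod_cast Nat.cast_le.mpr (le_max_right _ _)
          _ ≤ (k : ℝ) := by exact_mod_cast hkk₀
      rw [div_le_iff₀ (by linarith)] at hkc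
      nlinarith
    linarith [h1, h2 ▸ h1, h3]
  have hBc : B ^ θ ≤ c ^ k := by
    have h1 : B ^ θ = Real.exp (θ * Real.log B) := by
      rw [Real.rpow_def_of_pos hB0]; ring_nf
    have h2 : (c:ℝ) ^ k = Real.exp ((k:ℝ) * Real.log c) := by
      rw [← Real.log_pow, Real.exp_log (pow_pos hc0 _)]
    rw [h1, h2]
    exact Real.exp_le_exp.mpr hkey
  filter_upwards [iter k, eventually_gt_atTop (0:ℝ)] with t hit ht
  have harg : A ^ ((k:ℝ) * g) * t ≤ B ^ g * t := by
    apply mul_le_mul_of_nonneg_right _ ht.le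
    rw [Real.rpow_mul hA0.le, Real.rpow_natCast]
    exact Real.rpow_le_rpow (pow_nonneg hA0.le _) hAkB hg.le
  calc B ^ θ * ω t ≤ c ^ k * ω t := mul_le_mul_of_nonneg_right hBc (hnn t ht)
    _ ≤ ω (A ^ ((k:ℝ) * g) * t) := hit
    _ ≤ ω (B ^ g * t) := hmono _ _ (mul_pos (rpow_pos_of_pos hA0 _) ht) harg

variable {ω : ℝ → ℝ}

lemma w0_nonneg (hW : IsW0 ω) : ∀ t : ℝ, 0 ≤ ω t := hW.1.1

lemma w0_mono (hW : IsW0 ω) : ∀ a b : ℝ, 0 < a → a ≤ b → ω a ≤ ω b :=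
  fun a b ha hab => hW.1.2.1 (mem_Ici.mpr ha.le) (mem_Ici.mpr (ha.le.trans hab)) hab

lemma w0_one (hW : IsW0 ω) : ω 1 = 0 := hW.2.2.1 1 ⟨zero_le_one, le_refl 1⟩

lemma phiStar_bddAbove (hW : IsW0 ω) {x : ℝ} (hx : 0 ≤ x) :
    BddAbove {z : ℝ | ∃ y : ℝ, 0 ≤ y ∧ z = x * y - ω (Real.exp y)} := by
  have hlo := hW.2.2.2.1
  have heps : ∀ᶠ t : ℝ in atTop, ‖Real.log t‖ ≤ (1/(x+1)) * ‖ω t‖ :=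
    hlo.def (by positivity)
  obtain ⟨T', hT'⟩ := eventually_atTop.mp heps
  set T : ℝ := max T' 1 with hT
  have hT1 : (1:ℝ) ≤ T := le_max_right _ _
  refine ⟨max 0 (x * Real.log T), ?_⟩
  rintro z ⟨y, hy, rfl⟩
  rcases le_or_gt T (Real.exp y) with h | h
  · have h1 := hT' _ (le_trans (le_max_left _ _) h)
    rw [Real.log_exp] at h1
    have h2 : y ≤ (1/(x+1)) * ω (Real.exp y) := by
      have hny : y ≤ ‖y‖ := le_abs_self y
      have hnω : ‖ω (Real.exp y)‖ = ω (Real.exp y) := abs_of_nonneg (w0_nonneg hW _)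
      rw [hnω] at h1; linarith
    have h3 : (x+1) * y ≤ ω (Real.exp y) := by
      rw [div_mul_eq_mul_div, le_div_iff₀ (by positivity : (0:ℝ) < x+1)] at h2
      linarith [h2]
    have : x * y - ω (Real.exp y) ≤ -y := by linarith
    have : x * y - ω (Real.exp y) ≤ 0 := by linarith
    exact le_trans this (le_max_left _ _)
  · have hyT : y < Real.log T := by
      rw [← Real.log_exp y]
      exact Real.log_lt_log (Real.exp_pos _) h
    have : x * y - ω (Real.exp y) ≤ x * y := by
      have := w0_nonneg hW (Real.exp y); linarith
    have h2 : x * y ≤ x * Real.log T := mul_le_mul_of_nonneg_left hyT.le hx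
    exact le_trans this (le_trans h2 (le_max_right _ _))

lemma phiStar_setnonempty (ω : ℝ → ℝ) (x : ℝ) :
    {z : ℝ | ∃ y : ℝ, 0 ≤ y ∧ z = x * y - ω (Real.exp y)}.Nonempty :=
  ⟨x * 0 - ω (Real.exp 0), 0, le_refl 0, rfl⟩

lemma phiStar_nonneg (hW : IsW0 ω) {x : ℝ} (hx : 0 ≤ x) : 0 ≤ phiStar ω x := by
  have h0 : (0:ℝ) ∈ {z : ℝ | ∃ y : ℝ, 0 ≤ y ∧ z = x * y - ω (Real.exp y)} :=
    ⟨0, le_refl 0, by simp [Real.exp_zero, w0_one hW]⟩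
  exact le_csSup (phiStar_bddAbove hW hx) h0

lemma phiStar_ge (hW : IsW0 ω) {x : ℝ} (hx : 0 ≤ x) {Y : ℝ} (hY : 0 ≤ Y) :
    x * Y - ω (Real.exp Y) ≤ phiStar ω x :=
  le_csSup (phiStar_bddAbove hW hx) ⟨Y, hY, rfl⟩

lemma phiStar_zero (hW : IsW0 ω) : phiStar ω 0 = 0 := by
  apply le_antisymm
  · apply csSup_le (phiStar_setnonempty ω 0)
    rintro z ⟨y, hy, rfl⟩
    have := w0_nonneg hW (Real.exp y); linarith
  · exact phiStar_nonneg hW (le_refl 0)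

/-- Discretized approximate Fenchel–Moreau inequality. -/
lemma exists_F_ge (hW : IsW0 ω) {ℓ : ℝ} (hℓ : 0 < ℓ) {t : ℝ} (ht : 1 ≤ t) :
    ∃ p : ℕ, (ω t - 1)/ℓ - Real.log t ≤ (p:ℝ) * Real.log t - (1/ℓ) * phiStar ω (ℓ * p) := by
  have ht0 : (0:ℝ) < t := lt_of_lt_of_le one_pos ht
  set Y := Real.log t with hYdef
  have hY0 : 0 ≤ Y := Real.log_nonneg ht
  set φ : ℝ → ℝ := fun y => ω (Real.exp y) with hφdef
  have hconv : ConvexOn ℝ univ φ := hW.2.2.2.2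
  have hφY : φ Y = ω t := by rw [hφdef]; simp [hYdef, Real.exp_log ht0]
  have hφmono : ∀ y₁ y₂ : ℝ, y₁ ≤ y₂ → φ y₁ ≤ φ y₂ := fun y₁ y₂ h =>
    w0_mono hW _ _ (Real.exp_pos _) (Real.exp_le_exp.mpr h)
  set x₁ : ℝ := φ (Y+1) - φ Y with hx₁def
  have hx₁0 : 0 ≤ x₁ := by
    have := hφmono Y (Y+1) (by linarith); simp [hx₁def]; linarith
  set δ : ℝ := 1/(x₁+1) with hδdef
  have hδ0 : 0 < δ := by positivity
  have hδ1 : δ ≤ 1 := by rw [hδdef, div_le_one (by positivity)]; linarith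
  set x : ℝ := (φ (Y+δ) - φ Y)/δ with hxdef
  have hx0 : 0 ≤ x := div_nonneg (by have := hφmono Y (Y+δ) (by linarith); linarith) hδ0.le
  have hxδ : x * δ = φ (Y+δ) - φ Y := by rw [hxdef]; field_simp
  have hxx₁ : x ≤ x₁ := by
    have hcomb := hconv.2 (mem_univ Y) (mem_univ (Y+1))
      (show (0:ℝ) ≤ 1-δ by linarith) hδ0.le (by ring : (1-δ)+δ = 1)
    have harg : (1-δ) • Y + δ • (Y+1) = Y + δ := by simp [smul_eq_mul]; ring
    rw [harg, smul_eq_mul, smul_eq_mul] at hcomb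
    rw [hxdef, div_le_iff₀ hδ0]
    nlinarith [hcomb]
  have hxδ1 : x * δ ≤ 1 := by
    calc x * δ ≤ x₁ * δ := mul_le_mul_of_nonneg_right hxx₁ hδ0.le
      _ = x₁ / (x₁+1) := by rw [hδdef]; ring
      _ ≤ 1 := by rw [div_le_one (by positivity)]; linarith
  -- supporting line with error 1
  have hsupp : ∀ y : ℝ, 0 ≤ y → φ Y + x*(y - Y) - 1 ≤ φ y := by
    intro y hy
    rcases lt_trichotomy y Y with h | h | h
    · have hs := hconv.slope_mono_adjacent (mem_univ y) (mem_univ (Y+δ)) h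
        (by linarith : Y < Y + δ)
      have harg : Y + δ - Y = δ := by ring
      rw [harg] at hs
      have h2 : (φ Y - φ y) / (Y - y) ≤ x := by rw [hxdef]; exact hs
      rw [div_le_iff₀ (by linarith : (0:ℝ) < Y - y)] at h2
      nlinarith
    · subst h; simp
    · rcases lt_trichotomy y (Y+δ) with h' | h' | h'
      · have h2 : φ Y ≤ φ y := hφmono Y y h.le
        have h3 : x*(y-Y) ≤ x*δ := mul_le_mul_of_nonneg_left (by linarith) hx0
        linarith
      · subst h'; linarith [hxδ]
      · have hs := hconv.slope_mono_adjacent (mem_univ Y) (mem_univ y)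
          (by linarith : Y < Y + δ) h'
        have harg : Y + δ - Y = δ := by ring
        rw [harg] at hs
        have h2 : x ≤ (φ y - φ (Y+δ)) / (y - (Y+δ)) := by rw [hxdef]; exact hs
        rw [le_div_iff₀ (by linarith : (0:ℝ) < y - (Y+δ))] at h2
        nlinarith
  set p : ℕ := ⌊x/ℓ⌋₊ with hpdef
  have hp1 : ℓ*(p:ℝ) ≤ x := by
    have h := Nat.floor_le (div_nonneg hx0 hℓ.le)
    calc ℓ*(p:ℝ) ≤ ℓ*(x/ℓ) := mul_le_mul_of_nonneg_left h hℓ.le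
      _ = x := by field_simp
  have hp2 : x - ℓ ≤ ℓ*(p:ℝ) := by
    have h := Nat.lt_floor_add_one (x/ℓ)
    rw [div_lt_iff₀ hℓ] at h
    nlinarith
  have hps : phiStar ω (ℓ*p) ≤ ℓ*p*Y - φ Y + 1 + ℓ*Y := by
    apply csSup_le (phiStar_setnonempty ω _)
    rintro z ⟨y, hy, rfl⟩
    have h1 := hsupp y hy
    have hkey : (ℓ*(p:ℝ) - x)*(y - Y) ≤ ℓ*Y := by
      rcases le_or_gt Y y with h | h
      · have hle : (ℓ*(p:ℝ) - x) * (y - Y) ≤ 0 :=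
          mul_nonpos_of_nonpos_of_nonneg (by linarith) (by linarith)
        have : 0 ≤ ℓ * Y := mul_nonneg hℓ.le hY0
        linarith
      · have e1 : (ℓ*(p:ℝ) - x)*(y - Y) = (x - ℓ*(p:ℝ))*(Y - y) := by ring
        have e2 : (x - ℓ*(p:ℝ))*(Y - y) ≤ ℓ*(Y - y) :=
          mul_le_mul_of_nonneg_right (by linarith) (by linarith)
        have e3 : ℓ*(Y - y) ≤ ℓ*Y := by
          apply mul_le_mul_of_nonneg_left _ hℓ.le; linarith
        linarith
    nlinarith
  refine ⟨p, ?_⟩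
  rw [← hφY]
  have h2 : (1/ℓ) * phiStar ω (ℓ*p) ≤ (1/ℓ) * (ℓ*p*Y - φ Y + 1 + ℓ*Y) :=
    mul_le_mul_of_nonneg_left hps (by positivity)
  have h3 : (1/ℓ) * (ℓ*(p:ℝ)*Y - φ Y + 1 + ℓ*Y) = (p:ℝ)*Y - (φ Y - 1)/ℓ + Y := by
    field_simp; ring
  rw [h3] at h2
  linarith

lemma F_le (hW : IsW0 ω) {ℓ : ℝ} (hℓ : 0 < ℓ) {t : ℝ} (ht : 1 ≤ t) (p : ℕ) :
    (p:ℝ) * Real.log t - (1/ℓ) * phiStar ω (ℓ * p) ≤ ω t / ℓ := by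
  have ht0 : (0:ℝ) < t := lt_of_lt_of_le one_pos ht
  have h := phiStar_ge hW (x := ℓ*p) (by positivity) (Y := Real.log t) (Real.log_nonneg ht)
  rw [Real.exp_log ht0] at h
  have h2 : (1/ℓ) * (ℓ*(p:ℝ)*Real.log t - ω t) ≤ (1/ℓ) * phiStar ω (ℓ*p) :=
    mul_le_mul_of_nonneg_left h (by positivity)
  have h3 : (1/ℓ) * (ℓ*(p:ℝ)*Real.log t - ω t) = (p:ℝ)*Real.log t - ω t/ℓ := by
    field_simp
  rw [h3] at h2
  linarith

lemma omegaSeq_set_eq {ℓ : ℝ} (hℓ : 0 < ℓ) {t : ℝ} (ht : 0 < t) :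
    {z : ℝ | ∃ p : ℕ, z = Real.log (t ^ p / assocSeq ω ℓ p)} =
    {z : ℝ | ∃ p : ℕ, z = (p:ℝ) * Real.log t - (1/ℓ) * phiStar ω (ℓ * p)} := by
  have hrw : ∀ p : ℕ, Real.log (t ^ p / assocSeq ω ℓ p)
      = (p:ℝ) * Real.log t - (1/ℓ) * phiStar ω (ℓ * p) := by
    intro p
    rw [assocSeq, Real.log_div (pow_ne_zero _ ht.ne') (Real.exp_ne_zero _),
      Real.log_pow, Real.log_exp]
  ext z
  constructor
  · rintro ⟨p, rfl⟩; exact ⟨p, (hrw p).symm ▸ rfl⟩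
  · rintro ⟨p, rfl⟩; exact ⟨p, (hrw p).symm⟩

lemma omegaSeq_bdd (hW : IsW0 ω) {ℓ : ℝ} (hℓ : 0 < ℓ) {t : ℝ} (ht : 0 < t) :
    BddAbove {z : ℝ | ∃ p : ℕ, z = (p:ℝ) * Real.log t - (1/ℓ) * phiStar ω (ℓ * p)} := by
  refine ⟨ω (max t 1) / ℓ, ?_⟩
  rintro z ⟨p, rfl⟩
  have h1 : Real.log t ≤ Real.log (max t 1) :=
    Real.log_le_log ht (le_max_left _ _)
  have h2 : (p:ℝ) * Real.log t ≤ (p:ℝ) * Real.log (max t 1) :=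
    mul_le_mul_of_nonneg_left h1 (Nat.cast_nonneg p)
  have h3 := F_le hW hℓ (t := max t 1) (le_max_right _ _) p
  linarith

lemma F_setnonempty (ω : ℝ → ℝ) (ℓ t : ℝ) :
    {z : ℝ | ∃ p : ℕ, z = (p:ℝ) * Real.log t - (1/ℓ) * phiStar ω (ℓ * p)}.Nonempty :=
  ⟨_, 0, rfl⟩

lemma omegaSeq_le (hW : IsW0 ω) {ℓ : ℝ} (hℓ : 0 < ℓ) {t : ℝ} (ht : 1 ≤ t) :
    omegaSeq (assocSeq ω ℓ) t ≤ ω t / ℓ := by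
  have ht0 : (0:ℝ) < t := lt_of_lt_of_le one_pos ht
  rw [omegaSeq, omegaSeq_set_eq hℓ ht0]
  apply csSup_le (F_setnonempty ω ℓ t)
  rintro z ⟨p, rfl⟩
  exact F_le hW hℓ ht p

lemma omegaSeq_ge (hW : IsW0 ω) {ℓ : ℝ} (hℓ : 0 < ℓ) {t : ℝ} (ht : 1 ≤ t) :
    (ω t - 1)/ℓ - Real.log t ≤ omegaSeq (assocSeq ω ℓ) t := by
  have ht0 : (0:ℝ) < t := lt_of_lt_of_le one_pos ht
  rw [omegaSeq, omegaSeq_set_eq hℓ ht0]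
  obtain ⟨p, hp⟩ := exists_F_ge hW hℓ ht
  exact le_trans hp (le_csSup (omegaSeq_bdd hW hℓ ht0) ⟨p, rfl⟩)

lemma omegaSeq_nonneg (hW : IsW0 ω) {ℓ : ℝ} (hℓ : 0 < ℓ) {t : ℝ} (ht : 0 < t) :
    0 ≤ omegaSeq (assocSeq ω ℓ) t := by
  rw [omegaSeq, omegaSeq_set_eq hℓ ht]
  have h0 : (0:ℝ) ∈ {z : ℝ | ∃ p : ℕ, z = (p:ℝ) * Real.log t - (1/ℓ) * phiStar ω (ℓ * p)} :=
    ⟨0, by simp [phiStar_zero hW]⟩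
  exact le_csSup (omegaSeq_bdd hW hℓ ht) h0

lemma omegaSeq_mono (hW : IsW0 ω) {ℓ : ℝ} (hℓ : 0 < ℓ) :
    ∀ a b : ℝ, 0 < a → a ≤ b → omegaSeq (assocSeq ω ℓ) a ≤ omegaSeq (assocSeq ω ℓ) b := by
  intro a b ha hab
  have hb : 0 < b := lt_of_lt_of_le ha hab
  rw [omegaSeq, omegaSeq, omegaSeq_set_eq hℓ ha, omegaSeq_set_eq hℓ hb]
  apply csSup_le (F_setnonempty ω ℓ a)
  rintro z ⟨p, rfl⟩
  have h1 : (p:ℝ) * Real.log a ≤ (p:ℝ) * Real.log b :=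
    mul_le_mul_of_nonneg_left (Real.log_le_log ha hab) (Nat.cast_nonneg p)
  exact le_trans (by linarith) (le_csSup (omegaSeq_bdd hW hℓ hb) ⟨p, rfl⟩)

lemma omegaSeq_sand (hW : IsW0 ω) {ℓ : ℝ} (hℓ : 0 < ℓ) :
    ∀ᶠ t : ℝ in atTop, (1/(2*ℓ)) * ω t ≤ omegaSeq (assocSeq ω ℓ) t ∧
      omegaSeq (assocSeq ω ℓ) t ≤ (1/ℓ) * ω t := by
  have hlo := hW.2.2.2.1
  have heps : ∀ᶠ t : ℝ in atTop, ‖Real.log t‖ ≤ (1/(4*ℓ)) * ‖ω t‖ :=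
    hlo.def (by positivity)
  filter_upwards [heps, (hW.1.2.2).eventually_ge_atTop 4, eventually_ge_atTop (1:ℝ)]
    with t h1 h2 ht
  have ht0 : (0:ℝ) < t := lt_of_lt_of_le one_pos ht
  have hω4 : (4:ℝ) ≤ ω t := h2
  have hlogle : Real.log t ≤ (1/(4*ℓ)) * ω t := by
    have hla := le_abs_self (Real.log t)
    rw [Real.norm_eq_abs, Real.norm_eq_abs, abs_of_nonneg (w0_nonneg hW t)] at h1
    linarith
  have hllog : ℓ * Real.log t ≤ ω t / 4 := by
    have := mul_le_mul_of_nonneg_left hlogle hℓ.le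
    calc ℓ * Real.log t ≤ ℓ * ((1/(4*ℓ)) * ω t) := this
      _ = ω t / 4 := by field_simp
  constructor
  · have hge := omegaSeq_ge hW hℓ ht
    have h4 : (ω t - 1)/ℓ - Real.log t = (ω t - 1 - ℓ*Real.log t)/ℓ := by
      field_simp
    have h5 : (1/(2*ℓ)) * ω t ≤ (ω t - 1 - ℓ*Real.log t)/ℓ := by
      rw [le_div_iff₀ hℓ]
      have e : 1/(2*ℓ) * ω t * ℓ = ω t/2 := by field_simp
      rw [e]; linarith
    linarith [h4 ▸ hge]
  · have := omegaSeq_le hW hℓ ht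
    calc omegaSeq (assocSeq ω ℓ) t ≤ ω t / ℓ := this
      _ = (1/ℓ) * ω t := by ring

lemma sand_P {ω σ' : ℝ → ℝ} (hmono : ∀ a b : ℝ, 0 < a → a ≤ b → ω a ≤ ω b)
    (hnn : ∀ t : ℝ, 0 < t → 0 ≤ ω t) {c C : ℝ} (hc : 0 < c) (hC : 0 < C)
    (hsand : ∀ᶠ t : ℝ in atTop, c * ω t ≤ σ' t ∧ σ' t ≤ C * ω t)
    {g : ℝ} (hg : 0 < g) (hP : P ω g) : P σ' g := by
  obtain ⟨A, c₁, hA, hc₁, hev⟩ := hP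
  obtain ⟨θ, hθ, B₀, hB₀, hup⟩ := upgrade hmono hnn hg hA hc₁ hev
  have h1 : Tendsto (fun B : ℝ => B ^ (θ - 1)) atTop atTop :=
    tendsto_rpow_atTop (by linarith)
  obtain ⟨B, hBcc, hBB₀, hB1⟩ :
      ∃ B : ℝ, C / c < B ^ (θ - 1) ∧ B₀ ≤ B ∧ 1 < B := by
    have := (h1.eventually_gt_atTop (C / c)).and
      ((eventually_ge_atTop B₀).and (eventually_gt_atTop (1:ℝ)))
    obtain ⟨B, h⟩ := this.exists
    exact ⟨B, h.1, h.2.1, h.2.2⟩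
  have hB0 : (0:ℝ) < B := lt_trans one_pos hB1
  have hBsplit : B ^ θ = B ^ (θ - 1) * B := by
    rw [← Real.rpow_add_one hB0.ne' (θ - 1)]; ring_nf
  have hgt : B < c * B ^ θ / C := by
    rw [lt_div_iff₀ hC, hBsplit]
    have h2 : C < c * B ^ (θ-1) := by
      rw [div_lt_iff₀ hc] at hBcc; linarith [hBcc]
    nlinarith
  refine ⟨B, c * B ^ θ / C, hB1, hgt, ?_⟩
  have hBg : (0:ℝ) < B ^ g := rpow_pos_of_pos hB0 g
  have hmap : Tendsto (fun t : ℝ => B ^ g * t) atTop atTop :=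
    Tendsto.const_mul_atTop hBg tendsto_id
  filter_upwards [hsand, hmap.eventually hsand, hup B hBB₀] with t hs hs2 hu
  have hBθ : (0:ℝ) < B ^ θ := rpow_pos_of_pos hB0 θ
  calc c * B ^ θ / C * σ' t ≤ c * B ^ θ / C * (C * ω t) := by
        apply mul_le_mul_of_nonneg_left hs.2; positivity
    _ = c * (B ^ θ * ω t) := by field_simp
    _ ≤ c * ω (B ^ g * t) := mul_le_mul_of_nonneg_left hu hc.le
    _ ≤ σ' (B ^ g * t) := hs2.1

lemma sand_iff {ω σ' : ℝ → ℝ} (hmono : ∀ a b : ℝ, 0 < a → a ≤ b → ω a ≤ ω b)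
    (hnn : ∀ t : ℝ, 0 < t → 0 ≤ ω t)
    (hmono' : ∀ a b : ℝ, 0 < a → a ≤ b → σ' a ≤ σ' b)
    (hnn' : ∀ t : ℝ, 0 < t → 0 ≤ σ' t) {c C : ℝ} (hc : 0 < c) (hC : 0 < C)
    (hsand : ∀ᶠ t : ℝ in atTop, c * ω t ≤ σ' t ∧ σ' t ≤ C * ω t)
    {g : ℝ} (hg : 0 < g) : P σ' g ↔ P ω g := by
  constructor
  · intro hP
    apply sand_P hmono' hnn' (c := 1/C) (C := 1/c) (by positivity) (by positivity) _ hg hP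
    filter_upwards [hsand] with t h
    constructor
    · rw [one_div, inv_mul_le_iff₀ hC]; exact h.2
    · rw [one_div, inv_mul_eq_div, le_div_iff₀ hc]; linarith [h.1]
  · exact sand_P hmono hnn hc hC hsand hg

-- lowerConj basics
lemma lcSet_nonempty (σ τ : ℝ → ℝ) (t : ℝ) :
    {z : ℝ | ∃ s : ℝ, 0 < s ∧ z = σ s + τ (t / s)}.Nonempty :=
  ⟨σ 1 + τ (t / 1), 1, one_pos, rfl⟩

lemma lcSet_bddBelow {σ τ : ℝ → ℝ} (hσ : ∀ s : ℝ, 0 < s → 0 ≤ σ s)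
    (hτ : ∀ s : ℝ, 0 < s → 0 ≤ τ s) {t : ℝ} (ht : 0 < t) :
    BddBelow {z : ℝ | ∃ s : ℝ, 0 < s ∧ z = σ s + τ (t / s)} := by
  refine ⟨0, ?_⟩
  rintro z ⟨s, hs, rfl⟩
  have := hσ s hs
  have := hτ (t/s) (div_pos ht hs)
  linarith

lemma lowerConj_le {σ τ : ℝ → ℝ} (hσ : ∀ s : ℝ, 0 < s → 0 ≤ σ s)
    (hτ : ∀ s : ℝ, 0 < s → 0 ≤ τ s) {t : ℝ} (ht : 0 < t) {s : ℝ} (hs : 0 < s) :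
    lowerConj σ τ t ≤ σ s + τ (t / s) :=
  csInf_le (lcSet_bddBelow hσ hτ ht) ⟨s, hs, rfl⟩

lemma le_lowerConj {σ τ : ℝ → ℝ} {t b : ℝ}
    (h : ∀ s : ℝ, 0 < s → b ≤ σ s + τ (t / s)) : b ≤ lowerConj σ τ t := by
  apply le_csInf (lcSet_nonempty σ τ t)
  rintro z ⟨s, hs, rfl⟩
  exact h s hs

lemma lowerConj_nonneg {σ τ : ℝ → ℝ} (hσ : ∀ s : ℝ, 0 < s → 0 ≤ σ s)
    (hτ : ∀ s : ℝ, 0 < s → 0 ≤ τ s) {t : ℝ} (ht : 0 < t) : 0 ≤ lowerConj σ τ t :=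
  le_lowerConj fun s hs => by
    have := hσ s hs; have := hτ (t/s) (div_pos ht hs); linarith

lemma lowerConj_mono {σ τ : ℝ → ℝ} (hσ : ∀ s : ℝ, 0 < s → 0 ≤ σ s)
    (hτ : ∀ s : ℝ, 0 < s → 0 ≤ τ s)
    (hτm : ∀ a b : ℝ, 0 < a → a ≤ b → τ a ≤ τ b) :
    ∀ a b : ℝ, 0 < a → a ≤ b → lowerConj σ τ a ≤ lowerConj σ τ b := by
  intro a b ha hab
  apply le_csInf (lcSet_nonempty σ τ b)
  rintro z ⟨s, hs, rfl⟩
  have h1 : lowerConj σ τ a ≤ σ s + τ (a / s) := lowerConj_le hσ hτ ha hs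
  have h2 : τ (a / s) ≤ τ (b / s) :=
    hτm _ _ (div_pos ha hs) (by gcongr)
  linarith

lemma lowerConj_tendsto {σ τ : ℝ → ℝ} (hσ : ∀ s : ℝ, 0 < s → 0 ≤ σ s)
    (hτ : ∀ s : ℝ, 0 < s → 0 ≤ τ s)
    (hσm : ∀ a b : ℝ, 0 < a → a ≤ b → σ a ≤ σ b)
    (hτm : ∀ a b : ℝ, 0 < a → a ≤ b → τ a ≤ τ b)
    (hσt : Tendsto σ atTop atTop) (hτt : Tendsto τ atTop atTop) :
    Tendsto (lowerConj σ τ) atTop atTop := by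
  rw [tendsto_atTop]
  intro b
  have hsq : Tendsto (fun t : ℝ => Real.sqrt t) atTop atTop := by
    apply Tendsto.congr' _ (tendsto_rpow_atTop (by norm_num : (0:ℝ) < 1/2))
    filter_upwards [eventually_ge_atTop (0:ℝ)] with t ht
    exact (Real.sqrt_eq_rpow t).symm
  have h1 : ∀ᶠ t : ℝ in atTop, b ≤ σ (Real.sqrt t) :=
    (hσt.comp hsq).eventually_ge_atTop b
  have h2 : ∀ᶠ t : ℝ in atTop, b ≤ τ (Real.sqrt t) :=
    (hτt.comp hsq).eventually_ge_atTop b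
  filter_upwards [h1, h2, eventually_gt_atTop (0:ℝ)] with t hb1 hb2 ht
  apply le_lowerConj
  intro s hs
  have hst : 0 < Real.sqrt t := Real.sqrt_pos.mpr ht
  rcases le_or_gt (Real.sqrt t) s with h | h
  · have := hσm _ _ hst h
    have := hτ (t/s) (div_pos ht hs)
    linarith
  · have hts : Real.sqrt t ≤ t / s := by
      rw [le_div_iff₀ hs]
      nlinarith [Real.mul_self_sqrt ht.le]
    have := hτm _ _ hst hts
    have := hσ s hs
    linarith

lemma P_lowerConj {σ τ : ℝ → ℝ}
    (hσnn : ∀ s : ℝ, 0 < s → 0 ≤ σ s) (hτnn : ∀ s : ℝ, 0 < s → 0 ≤ τ s)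
    (hσm : ∀ a b : ℝ, 0 < a → a ≤ b → σ a ≤ σ b)
    (hτm : ∀ a b : ℝ, 0 < a → a ≤ b → τ a ≤ τ b)
    (hσt : Tendsto σ atTop atTop) (hτt : Tendsto τ atTop atTop)
    {g₁ g₂ : ℝ} (hg₁ : 0 < g₁) (hg₂ : 0 < g₂) (h₁ : P σ g₁) (h₂ : P τ g₂) :
    P (lowerConj σ τ) (g₁ + g₂) := by
  obtain ⟨A₁, c₁, hA₁, hc₁, hev₁⟩ := h₁
  obtain ⟨A₂, c₂, hA₂, hc₂, hev₂⟩ := h₂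
  obtain ⟨θσ, hθσ, B₁, hB₁, hupσ⟩ := upgrade hσm hσnn hg₁ hA₁ hc₁ hev₁
  obtain ⟨θτ, hθτ, B₂, hB₂, hupτ⟩ := upgrade hτm hτnn hg₂ hA₂ hc₂ hev₂
  set B : ℝ := max (max B₁ B₂) 2 with hBdef
  have hB1 : (1:ℝ) < B := lt_of_lt_of_le one_lt_two (le_max_right _ _)
  have hB0 : (0:ℝ) < B := lt_trans one_pos hB1
  set θm : ℝ := min θσ θτ with hθmdef
  have hθm : 1 < θm := lt_min hθσ hθτ
  have hBθm0 : (0:ℝ) < B ^ θm := rpow_pos_of_pos hB0 _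
  have hBθmσ : B ^ θm ≤ B ^ θσ :=
    Real.rpow_le_rpow_of_exponent_le hB1.le (min_le_left _ _)
  have hBθmτ : B ^ θm ≤ B ^ θτ :=
    Real.rpow_le_rpow_of_exponent_le hB1.le (min_le_right _ _)
  obtain ⟨S₁, hS₁⟩ := eventually_atTop.mp
    (hupσ B (le_trans (le_max_left _ _) (le_max_left _ _)))
  obtain ⟨S₂, hS₂⟩ := eventually_atTop.mp
    (hupτ B (le_trans (le_max_right _ _) (le_max_left _ _)))
  set T : ℝ := max (max S₁ S₂) 1 with hTdef
  have hT1 : (1:ℝ) ≤ T := le_max_right _ _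
  have hT0 : (0:ℝ) < T := lt_of_lt_of_le one_pos hT1
  have hTS₁ : S₁ ≤ T := le_trans (le_max_left _ _) (le_max_left _ _)
  have hTS₂ : S₂ ≤ T := le_trans (le_max_right _ _) (le_max_left _ _)
  set K : ℝ := B ^ θm * (σ T + τ T) with hKdef
  have hK0 : 0 ≤ K := mul_nonneg hBθm0.le (by
    have := hσnn T hT0; have := hτnn T hT0; linarith)
  set L : ℝ → ℝ := lowerConj σ τ with hLdef
  have key : ∀ t : ℝ, max (T^2) 1 ≤ t →
      B ^ θm * L t - K ≤ L (B ^ (g₁ + g₂) * t) := by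
    intro t ht
    have ht1 : (1:ℝ) ≤ t := le_trans (le_max_right _ _) ht
    have ht0 : (0:ℝ) < t := lt_of_lt_of_le one_pos ht1
    have htT : T^2 ≤ t := le_trans (le_max_left _ _) ht
    apply le_lowerConj
    intro s hs
    set u : ℝ := s / B ^ g₁ with hudef
    have hBg₁ : (0:ℝ) < B ^ g₁ := rpow_pos_of_pos hB0 _
    have hu0 : 0 < u := div_pos hs hBg₁
    have hsu : s = B ^ g₁ * u := by rw [hudef]; field_simp
    have harg : (B ^ (g₁ + g₂) * t) / s = B ^ g₂ * (t / u) := by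
      rw [hsu, Real.rpow_add hB0]; field_simp
    rw [harg, hsu]
    have hLt : L t ≤ σ u + τ (t / u) := lowerConj_le hσnn hτnn ht0 hu0
    have hx2 : B ^ θm * L t ≤ B ^ θm * (σ u + τ (t/u)) :=
      mul_le_mul_of_nonneg_left hLt hBθm0.le
    have hx1 : B ^ θm * (σ u + τ (t/u)) = B ^ θm * σ u + B ^ θm * τ (t/u) :=
      mul_add _ _ _
    have hx7 : K = B ^ θm * σ T + B ^ θm * τ T := mul_add _ _ _
    have htu0 : 0 < t / u := div_pos ht0 hu0
    by_cases h1 : T ≤ u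
    · have e1 : B ^ θσ * σ u ≤ σ (B ^ g₁ * u) := hS₁ u (le_trans hTS₁ h1)
      have hx3 : B ^ θm * σ u ≤ B ^ θσ * σ u :=
        mul_le_mul_of_nonneg_right hBθmσ (hσnn u hu0)
      by_cases h2 : T ≤ t / u
      · have e2 : B ^ θτ * τ (t/u) ≤ τ (B ^ g₂ * (t/u)) := hS₂ _ (le_trans hTS₂ h2)
        have hx4 : B ^ θm * τ (t/u) ≤ B ^ θτ * τ (t/u) :=
          mul_le_mul_of_nonneg_right hBθmτ (hτnn _ htu0)
        linarith
      · have h2' : t/u ≤ T := le_of_not_ge h2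
        have e5 : τ (t/u) ≤ τ T := hτm _ _ htu0 h2'
        have hx4 : B ^ θm * τ (t/u) ≤ B ^ θm * τ T :=
          mul_le_mul_of_nonneg_left e5 hBθm0.le
        have hx5 : 0 ≤ B ^ θm * σ T := mul_nonneg hBθm0.le (hσnn T hT0)
        have hx6 : 0 ≤ τ (B ^ g₂ * (t/u)) := hτnn _ (mul_pos (rpow_pos_of_pos hB0 _) htu0)
        linarith
    · have h1' : u ≤ T := (le_of_not_ge h1)
      have h2 : T ≤ t / u := by
        rw [le_div_iff₀ hu0]
        nlinarith
      have e2 : B ^ θτ * τ (t/u) ≤ τ (B ^ g₂ * (t/u)) := hS₂ _ (le_trans hTS₂ h2)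
      have hx4 : B ^ θm * τ (t/u) ≤ B ^ θτ * τ (t/u) :=
        mul_le_mul_of_nonneg_right hBθmτ (hτnn _ htu0)
      have e5 : σ u ≤ σ T := hσm _ _ hu0 h1'
      have hx3 : B ^ θm * σ u ≤ B ^ θm * σ T :=
        mul_le_mul_of_nonneg_left e5 hBθm0.le
      have hx5 : 0 ≤ B ^ θm * τ T := mul_nonneg hBθm0.le (hτnn T hT0)
      have hx6 : 0 ≤ σ (B ^ g₁ * u) := hσnn _ (mul_pos (rpow_pos_of_pos hB0 _) hu0)
      linarith
  have hLtend : Tendsto L atTop atTop := lowerConj_tendsto hσnn hτnn hσm hτm hσt hτt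
  have hΔ : B < B ^ θm := by
    have := Real.rpow_lt_rpow_of_exponent_lt hB1 hθm
    rwa [Real.rpow_one] at this
  refine ⟨B, (B ^ θm + B)/2, hB1, by linarith, ?_⟩
  filter_upwards [eventually_ge_atTop (max (T^2) 1),
    hLtend.eventually_ge_atTop (2*K/(B ^ θm - B))] with t h1 h2
  have h3 := key t h1
  rw [div_le_iff₀ (by linarith : (0:ℝ) < B ^ θm - B)] at h2
  nlinarith [h3, h2]

lemma lowerConj_sand {σ τ σ' τ' : ℝ → ℝ}
    (hσnn : ∀ s : ℝ, 0 < s → 0 ≤ σ s) (hτnn : ∀ s : ℝ, 0 < s → 0 ≤ τ s)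
    (hσm : ∀ a b : ℝ, 0 < a → a ≤ b → σ a ≤ σ b)
    (hτm : ∀ a b : ℝ, 0 < a → a ≤ b → τ a ≤ τ b)
    (hσt : Tendsto σ atTop atTop) (hτt : Tendsto τ atTop atTop)
    (hσ'nn : ∀ s : ℝ, 0 < s → 0 ≤ σ' s) (hτ'nn : ∀ s : ℝ, 0 < s → 0 ≤ τ' s)
    (hσ'm : ∀ a b : ℝ, 0 < a → a ≤ b → σ' a ≤ σ' b)
    (hτ'm : ∀ a b : ℝ, 0 < a → a ≤ b → τ' a ≤ τ' b)
    {c C : ℝ} (hc : 0 < c) (hC : 0 < C)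
    (hs1 : ∀ᶠ s : ℝ in atTop, c * σ s ≤ σ' s ∧ σ' s ≤ C * σ s)
    (hs2 : ∀ᶠ s : ℝ in atTop, c * τ s ≤ τ' s ∧ τ' s ≤ C * τ s) :
    ∀ᶠ t : ℝ in atTop, (c/2) * lowerConj σ τ t ≤ lowerConj σ' τ' t ∧
      lowerConj σ' τ' t ≤ (2*C) * lowerConj σ τ t := by
  obtain ⟨T₁, hT₁⟩ := eventually_atTop.mp hs1
  obtain ⟨T₂, hT₂⟩ := eventually_atTop.mp hs2
  set T : ℝ := max (max T₁ T₂) 1 with hTdef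
  have hT1 : (1:ℝ) ≤ T := le_max_right _ _
  have hT0 : (0:ℝ) < T := lt_of_lt_of_le one_pos hT1
  have hTT₁ : T₁ ≤ T := le_trans (le_max_left _ _) (le_max_left _ _)
  have hTT₂ : T₂ ≤ T := le_trans (le_max_right _ _) (le_max_left _ _)
  set L : ℝ → ℝ := lowerConj σ τ with hLdef
  set L' : ℝ → ℝ := lowerConj σ' τ' with hL'def
  set K : ℝ := c * (σ T + τ T) with hKdef
  set K' : ℝ := σ' T + τ' T with hK'def
  have hK'0 : 0 ≤ K' := by
    have := hσ'nn T hT0; have := hτ'nn T hT0; linarith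
  have hLtend : Tendsto L atTop atTop := lowerConj_tendsto hσnn hτnn hσm hτm hσt hτt
  have keylow : ∀ t : ℝ, max (T^2) 1 ≤ t → c * L t - K ≤ L' t := by
    intro t ht
    have ht1 : (1:ℝ) ≤ t := le_trans (le_max_right _ _) ht
    have ht0 : (0:ℝ) < t := lt_of_lt_of_le one_pos ht1
    have htT : T^2 ≤ t := le_trans (le_max_left _ _) ht
    apply le_lowerConj
    intro s hs
    have hts0 : 0 < t / s := div_pos ht0 hs
    have hLle : L t ≤ σ s + τ (t/s) := lowerConj_le hσnn hτnn ht0 hs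
    have hcL : c * L t ≤ c * (σ s + τ (t/s)) := mul_le_mul_of_nonneg_left hLle hc.le
    have hx1 : c * (σ s + τ (t/s)) = c * σ s + c * τ (t/s) := mul_add _ _ _
    have hx7 : K = c * σ T + c * τ T := mul_add _ _ _
    by_cases h1 : T ≤ s
    · have e1 : c * σ s ≤ σ' s := (hT₁ s (le_trans hTT₁ h1)).1
      by_cases h2 : T ≤ t / s
      · have e2 : c * τ (t/s) ≤ τ' (t/s) := (hT₂ _ (le_trans hTT₂ h2)).1
        have := hσnn s hs; have := hτnn _ hts0
        have hx5 : 0 ≤ c * τ T := mul_nonneg hc.le (hτnn T hT0)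
        have hx6 : 0 ≤ c * σ T := mul_nonneg hc.le (hσnn T hT0)
        linarith
      · have h2' : t/s ≤ T := le_of_not_ge h2
        have e5 : τ (t/s) ≤ τ T := hτm _ _ hts0 h2'
        have hx4 : c * τ (t/s) ≤ c * τ T := mul_le_mul_of_nonneg_left e5 hc.le
        have hx5 : 0 ≤ c * σ T := mul_nonneg hc.le (hσnn T hT0)
        have hx6 : 0 ≤ τ' (t/s) := hτ'nn _ hts0
        linarith
    · have h1' : s ≤ T := le_of_not_ge h1
      have h2 : T ≤ t / s := by
        rw [le_div_iff₀ hs]; nlinarith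
      have e2 : c * τ (t/s) ≤ τ' (t/s) := (hT₂ _ (le_trans hTT₂ h2)).1
      have e5 : σ s ≤ σ T := hσm _ _ hs h1'
      have hx3 : c * σ s ≤ c * σ T := mul_le_mul_of_nonneg_left e5 hc.le
      have hx5 : 0 ≤ c * τ T := mul_nonneg hc.le (hτnn T hT0)
      have hx6 : 0 ≤ σ' s := hσ'nn _ hs
      linarith
  have keyup : ∀ t : ℝ, max (T^2) 1 ≤ t → L' t ≤ C * L t + K' := by
    intro t ht
    have ht1 : (1:ℝ) ≤ t := le_trans (le_max_right _ _) ht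
    have ht0 : (0:ℝ) < t := lt_of_lt_of_le one_pos ht1
    have htT : T^2 ≤ t := le_trans (le_max_left _ _) ht
    -- show (L' t - K')/C ≤ L t
    have hlb : (L' t - K')/C ≤ L t := by
      apply le_lowerConj
      intro s hs
      rw [div_le_iff₀ hC]
      have hts0 : 0 < t / s := div_pos ht0 hs
      have hL'le : L' t ≤ σ' s + τ' (t/s) := lowerConj_le hσ'nn hτ'nn ht0 hs
      have hx1 : (σ s + τ (t/s)) * C = C * σ s + C * τ (t/s) := by ring
      by_cases h1 : T ≤ s
      · have e1 : σ' s ≤ C * σ s := (hT₁ s (le_trans hTT₁ h1)).2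
        by_cases h2 : T ≤ t / s
        · have e2 : τ' (t/s) ≤ C * τ (t/s) := (hT₂ _ (le_trans hTT₂ h2)).2
          linarith
        · have h2' : t/s ≤ T := le_of_not_ge h2
          have e5 : τ' (t/s) ≤ τ' T := hτ'm _ _ hts0 h2'
          have hx4 : 0 ≤ C * τ (t/s) := mul_nonneg hC.le (hτnn _ hts0)
          have hx6 : 0 ≤ σ' T := hσ'nn T hT0
          linarith
      · have h1' : s ≤ T := le_of_not_ge h1
        have h2 : T ≤ t / s := by
          rw [le_div_iff₀ hs]; nlinarith
        have e2 : τ' (t/s) ≤ C * τ (t/s) := (hT₂ _ (le_trans hTT₂ h2)).2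
        have e5 : σ' s ≤ σ' T := hσ'm _ _ hs h1'
        have hx4 : 0 ≤ C * σ s := mul_nonneg hC.le (hσnn _ hs)
        have hx6 : 0 ≤ τ' T := hτ'nn T hT0
        linarith
    rw [div_le_iff₀ hC] at hlb
    linarith
  filter_upwards [eventually_ge_atTop (max (T^2) 1),
    hLtend.eventually_ge_atTop (2*K/c), hLtend.eventually_ge_atTop (K'/C),
    hLtend.eventually_ge_atTop 0] with t h1 h2 h3 h4
  constructor
  · have h5 := keylow t h1
    rw [div_le_iff₀ hc] at h2
    nlinarith
  · have h5 := keyup t h1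
    rw [div_le_iff₀ hC] at h3
    nlinarith

lemma idx_add {σ τ : ℝ → ℝ}
    (hstep : ∀ g₁ g₂ : ℝ, 0 < g₁ → 0 < g₂ → gammaBarProp σ g₁ → gammaBarProp τ g₂ →
      gammaBarProp (lowerConj σ τ) (g₁+g₂)) :
    gammaBarIdx (lowerConj σ τ) ≤ gammaBarIdx σ + gammaBarIdx τ := by
  by_cases h₁ : gammaBarIdx σ = ⊤
  · rw [h₁]; simp
  by_cases h₂ : gammaBarIdx τ = ⊤
  · rw [h₂]; simp
  apply ENNReal.le_of_forall_pos_le_add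
  intro ε hε _
  have hε2 : ((ε:ℝ≥0∞)/2) ≠ 0 := by
    simp [ENNReal.div_eq_zero_iff, hε.ne']
  have h1 : gammaBarIdx σ < gammaBarIdx σ + (ε:ℝ≥0∞)/2 := ENNReal.lt_add_right h₁ hε2
  have h2 : gammaBarIdx τ < gammaBarIdx τ + (ε:ℝ≥0∞)/2 := ENNReal.lt_add_right h₂ hε2
  rw [gammaBarIdx] at h1 h2
  obtain ⟨a, ha, halt⟩ := sInf_lt_iff.mp h1
  obtain ⟨b, hb, hblt⟩ := sInf_lt_iff.mp h2
  obtain ⟨g₁, ⟨hg₁, hP₁⟩, rfl⟩ := ha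
  obtain ⟨g₂, ⟨hg₂, hP₂⟩, rfl⟩ := hb
  have hmem : ENNReal.ofReal (g₁+g₂) ∈
      ENNReal.ofReal '' {g : ℝ | 0 < g ∧ gammaBarProp (lowerConj σ τ) g} :=
    ⟨g₁+g₂, ⟨by linarith, hstep _ _ hg₁ hg₂ hP₁ hP₂⟩, rfl⟩
  calc gammaBarIdx (lowerConj σ τ) ≤ ENNReal.ofReal (g₁+g₂) := sInf_le hmem
    _ = ENNReal.ofReal g₁ + ENNReal.ofReal g₂ := ENNReal.ofReal_add hg₁.le hg₂.le
    _ ≤ (gammaBarIdx σ + (ε:ℝ≥0∞)/2) + (gammaBarIdx τ + (ε:ℝ≥0∞)/2) :=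
        add_le_add halt.le hblt.le
    _ = gammaBarIdx σ + gammaBarIdx τ + ((ε:ℝ≥0∞)/2 + (ε:ℝ≥0∞)/2) := by
        rw [add_add_add_comm]
    _ = gammaBarIdx σ + gammaBarIdx τ + ε := by rw [ENNReal.add_halves]

lemma idx_omegaSeq {ω : ℝ → ℝ} (hW : IsW0 ω) {ℓ : ℝ} (hℓ : 0 < ℓ) :
    gammaBarIdx (omegaSeq (assocSeq ω ℓ)) = gammaBarIdx ω := by
  have hωt : Tendsto ω atTop atTop := hW.1.2.2
  have hpos : ∀ᶠ t : ℝ in atTop, 0 < ω t := hωt.eventually_gt_atTop 0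
  have hposS : ∀ᶠ t : ℝ in atTop, 0 < omegaSeq (assocSeq ω ℓ) t := by
    filter_upwards [omegaSeq_sand hW hℓ, hpos] with t h1 h2
    have h3 : 0 < (1/(2*ℓ)) * ω t := by positivity
    linarith [h1.1]
  apply gammaBarIdx_congr hposS hpos
  intro g hg
  exact sand_iff (w0_mono hW) (fun t _ => hW.1.1 t) (omegaSeq_mono hW hℓ)
    (fun t ht => omegaSeq_nonneg hW hℓ ht) (by positivity) (by positivity)
    (omegaSeq_sand hW hℓ) hg

end Stmt1Aux

theorem stmt1 (σ τ : ℝ → ℝ) (hσ : IsW0 σ) (hτ : IsW0 τ)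
    (hγσ : gammaBarIdx σ < ⊤) (hγτ : gammaBarIdx τ < ⊤) :
    ∀ ℓ : ℝ, 0 < ℓ → ∀ ℓ₁ : ℝ, 0 < ℓ₁ → ∀ j : ℝ, 0 < j → ∀ j₁ : ℝ, 0 < j₁ →
      gammaBarIdx (lowerConj (omegaSeq (assocSeq σ ℓ)) (omegaSeq (assocSeq τ j)))
          = gammaBarIdx (lowerConj σ τ) ∧
      gammaBarIdx (lowerConj σ τ) ≤ gammaBarIdx σ + gammaBarIdx τ ∧
      gammaBarIdx σ + gammaBarIdx τ
          = gammaBarIdx (omegaSeq (assocSeq σ ℓ₁)) + gammaBarIdx (omegaSeq (assocSeq τ j₁)) := by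
  intro ℓ hℓ ℓ₁ hℓ₁ j hj j₁ hj₁
  have hσnn : ∀ s : ℝ, 0 < s → 0 ≤ σ s := fun s _ => hσ.1.1 s
  have hτnn : ∀ s : ℝ, 0 < s → 0 ≤ τ s := fun s _ => hτ.1.1 s
  have hσm := Stmt1Aux.w0_mono hσ
  have hτm := Stmt1Aux.w0_mono hτ
  have hσt : Tendsto σ atTop atTop := hσ.1.2.2
  have hτt : Tendsto τ atTop atTop := hτ.1.2.2
  have hσpos : ∀ᶠ t : ℝ in atTop, 0 < σ t := hσt.eventually_gt_atTop 0
  have hτpos : ∀ᶠ t : ℝ in atTop, 0 < τ t := hτt.eventually_gt_atTop 0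
  set S : ℝ → ℝ := omegaSeq (assocSeq σ ℓ) with hSdef
  set T' : ℝ → ℝ := omegaSeq (assocSeq τ j) with hTdef
  have hSm := Stmt1Aux.omegaSeq_mono hσ hℓ
  have hTm := Stmt1Aux.omegaSeq_mono hτ hj
  have hSnn : ∀ s : ℝ, 0 < s → 0 ≤ S s := fun s hs => Stmt1Aux.omegaSeq_nonneg hσ hℓ hs
  have hTnn : ∀ s : ℝ, 0 < s → 0 ≤ T' s := fun s hs => Stmt1Aux.omegaSeq_nonneg hτ hj hs
  set c0 : ℝ := min (1/(2*ℓ)) (1/(2*j)) with hc0def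
  set C0 : ℝ := max (1/ℓ) (1/j) with hC0def
  have hc0 : 0 < c0 := lt_min (by positivity) (by positivity)
  have hC0 : 0 < C0 := lt_of_lt_of_le (by positivity : (0:ℝ) < 1/ℓ) (le_max_left _ _)
  have hs1 : ∀ᶠ s : ℝ in atTop, c0 * σ s ≤ S s ∧ S s ≤ C0 * σ s := by
    filter_upwards [Stmt1Aux.omegaSeq_sand hσ hℓ] with s h
    constructor
    · calc c0 * σ s ≤ (1/(2*ℓ)) * σ s :=
            mul_le_mul_of_nonneg_right (min_le_left _ _) (hσ.1.1 s)
        _ ≤ S s := h.1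
    · calc S s ≤ (1/ℓ) * σ s := h.2
        _ ≤ C0 * σ s := mul_le_mul_of_nonneg_right (le_max_left _ _) (hσ.1.1 s)
  have hs2 : ∀ᶠ s : ℝ in atTop, c0 * τ s ≤ T' s ∧ T' s ≤ C0 * τ s := by
    filter_upwards [Stmt1Aux.omegaSeq_sand hτ hj] with s h
    constructor
    · calc c0 * τ s ≤ (1/(2*j)) * τ s :=
            mul_le_mul_of_nonneg_right (min_le_right _ _) (hτ.1.1 s)
        _ ≤ T' s := h.1
    · calc T' s ≤ (1/j) * τ s := h.2
        _ ≤ C0 * τ s := mul_le_mul_of_nonneg_right (le_max_right _ _) (hτ.1.1 s)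
  have hsandL := Stmt1Aux.lowerConj_sand hσnn hτnn hσm hτm hσt hτt
    hSnn hTnn hSm hTm hc0 hC0 hs1 hs2
  have hLt : Tendsto (lowerConj σ τ) atTop atTop :=
    Stmt1Aux.lowerConj_tendsto hσnn hτnn hσm hτm hσt hτt
  have hposL : ∀ᶠ t : ℝ in atTop, 0 < lowerConj σ τ t := hLt.eventually_gt_atTop 0
  have hposL' : ∀ᶠ t : ℝ in atTop, 0 < lowerConj S T' t := by
    filter_upwards [hsandL, hLt.eventually_gt_atTop 0] with t h1 h2
    have h3 : 0 < (c0/2) * lowerConj σ τ t := by positivity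
    linarith [h1.1]
  have hLm := Stmt1Aux.lowerConj_mono hσnn hτnn hτm
  have hLnn : ∀ t : ℝ, 0 < t → 0 ≤ lowerConj σ τ t :=
    fun t ht => Stmt1Aux.lowerConj_nonneg hσnn hτnn ht
  have hL'm := Stmt1Aux.lowerConj_mono hSnn hTnn hTm
  have hL'nn : ∀ t : ℝ, 0 < t → 0 ≤ lowerConj S T' t :=
    fun t ht => Stmt1Aux.lowerConj_nonneg hSnn hTnn ht
  refine ⟨?_, ?_, ?_⟩
  · apply Stmt1Aux.gammaBarIdx_congr hposL' hposL
    intro g hg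
    exact Stmt1Aux.sand_iff hLm hLnn hL'm hL'nn (by positivity) (by positivity) hsandL hg
  · apply Stmt1Aux.idx_add
    intro g₁ g₂ hg₁ hg₂ hp₁ hp₂
    exact (Stmt1Aux.gammaBarProp_iff_P hposL _).mpr
      (Stmt1Aux.P_lowerConj hσnn hτnn hσm hτm hσt hτt hg₁ hg₂
        ((Stmt1Aux.gammaBarProp_iff_P hσpos _).mp hp₁)
        ((Stmt1Aux.gammaBarProp_iff_P hτpos _).mp hp₂))
  · rw [Stmt1Aux.idx_omegaSeq hσ hℓ₁, Stmt1Aux.idx_omegaSeq hτ hj₁]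
end
end

section
/- Let σ be a weight function in the class W₀ with associated weight matrix {S^(ℓ) : ℓ > 0}. If γ(σ) > 0, then for all ℓ, ℓ₁, α > 0 one has γ(ω_{S^(ℓ)}) + α ≤ γ(((((ω_{S^(ℓ₁)})^ι)^α)_⋆)^{1/α}); and if γ̄(σ) < +∞, then for all ℓ, ℓ₁, α > 0 one has γ̄(((((ω_{S^(ℓ)})^ι)^α)_⋆)^{1/α}) ≤ γ̄(ω_{S^(ℓ₁)}) + α. (For any weight function ω one has ((((ω)^ι)^α)_⋆)^{1/α} = ω ⋆̌ id^{1/α}, where id^{1/α} : t ↦ t^{1/α}.) -/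
open Real Filter Asymptotics Set
open scoped ENNReal Topology

noncomputable section

def upB (ω : ℝ → ℝ) (g B K C T : ℝ) : Prop := ∀ s, T ≤ s → ω (B ^ g * s) ≤ K * ω s + C

def loB (ω : ℝ → ℝ) (g B A C T : ℝ) : Prop := ∀ s, T ≤ s → A * ω s - C ≤ ω (B ^ g * s)

def EquivC (c : ℝ) (ω₁ ω₂ : ℝ → ℝ) : Prop :=
  ∀ ε, 0 < ε → ∀ᶠ s in atTop, ω₂ s ≤ (1+ε) * (c * ω₁ s) ∧ c * ω₁ s ≤ (1+ε) * ω₂ s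

lemma eps_lt {K B : ℝ} (hK : 0 ≤ K) (hKB : K < B) :
    ∃ ε, 0 < ε ∧ (1+ε) * ((1+ε) * K) < B := by
  rcases eq_or_lt_of_le hK with h | h
  · exact ⟨1, one_pos, by rw [← h]; simpa using lt_of_le_of_lt hK hKB⟩
  · refine ⟨min 1 ((B - K)/(3*K+1)), ?_, ?_⟩
    · exact lt_min one_pos (div_pos (by linarith) (by linarith))
    · set ε := min 1 ((B - K)/(3*K+1)) with hε
      have h1 : ε ≤ 1 := min_le_left _ _
      have h2 : ε ≤ (B - K)/(3*K+1) := min_le_right _ _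
      have h2' : ε * (3*K+1) ≤ B - K := by
        rw [div_eq_mul_inv] at h2
        have := mul_le_mul_of_nonneg_right h2 (le_of_lt (by positivity : (0:ℝ) < 3*K+1))
        rwa [mul_assoc, inv_mul_cancel₀ (by positivity : (3*K+1) ≠ 0), mul_one] at this
      have hε0 : 0 < ε := lt_min one_pos (div_pos (by linarith) (by linarith))
      nlinarith [mul_pos hε0 h, sq_nonneg ε]

lemma equivC_symm {c : ℝ} {ω₁ ω₂ : ℝ → ℝ} (hc : 0 < c) (h : EquivC c ω₁ ω₂) :
    EquivC c⁻¹ ω₂ ω₁ := by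
  intro ε hε
  filter_upwards [h ε hε] with s ⟨h1, h2⟩
  constructor
  · calc ω₁ s = c⁻¹ * (c * ω₁ s) := by field_simp
      _ ≤ c⁻¹ * ((1+ε) * ω₂ s) := mul_le_mul_of_nonneg_left h2 (by positivity)
      _ = (1+ε) * (c⁻¹ * ω₂ s) := by ring
  · calc c⁻¹ * ω₂ s ≤ c⁻¹ * ((1+ε) * (c * ω₁ s)) := mul_le_mul_of_nonneg_left h1 (by positivity)
      _ = (1+ε) * ω₁ s := by field_simp

lemma transfer_up {c g B K C T : ℝ} {ω₁ ω₂ : ℝ → ℝ} (hc : 0 < c) (he : EquivC c ω₁ ω₂)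
    (hB : 1 < B) (hg : 0 < g) (hK : 0 ≤ K) (hKB : K < B) (hC : 0 ≤ C)
    (hup : upB ω₁ g B K C T) :
    ∃ K' C' T', 0 ≤ K' ∧ K' < B ∧ 0 ≤ C' ∧ upB ω₂ g B K' C' T' := by
  obtain ⟨ε, hε, hεB⟩ := eps_lt hK hKB
  have hBg : (0:ℝ) < B ^ g := rpow_pos_of_pos (by linarith) g
  have hten : Tendsto (fun s : ℝ => B ^ g * s) atTop atTop :=
    Tendsto.const_mul_atTop hBg tendsto_id
  have hev : ∀ᶠ s in atTop,
      ((ω₂ s ≤ (1+ε) * (c * ω₁ s) ∧ c * ω₁ s ≤ (1+ε) * ω₂ s) ∧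
       (ω₂ (B^g*s) ≤ (1+ε) * (c * ω₁ (B^g*s)) ∧ c * ω₁ (B^g*s) ≤ (1+ε) * ω₂ (B^g*s))) ∧
      T ≤ s := ((he ε hε).and (hten.eventually (he ε hε))).and (eventually_ge_atTop T)
  rw [eventually_atTop] at hev
  obtain ⟨T', hT'⟩ := hev
  refine ⟨(1+ε)*((1+ε)*K), (1+ε)*(c*C), T', by positivity, hεB, by positivity, ?_⟩
  intro s hs
  obtain ⟨⟨⟨h1, h2⟩, ⟨h3, h4⟩⟩, hTs⟩ := hT' s hs
  calc ω₂ (B^g*s) ≤ (1+ε) * (c * ω₁ (B^g*s)) := h3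
    _ ≤ (1+ε) * (c * (K * ω₁ s + C)) := by
        apply mul_le_mul_of_nonneg_left _ (by positivity)
        exact mul_le_mul_of_nonneg_left (hup s hTs) (le_of_lt hc)
    _ = (1+ε) * K * (c * ω₁ s) + (1+ε)*(c*C) := by ring
    _ ≤ (1+ε) * K * ((1+ε) * ω₂ s) + (1+ε)*(c*C) := by
        apply add_le_add_left
        exact mul_le_mul_of_nonneg_left h2 (by positivity)
    _ = (1+ε)*((1+ε)*K) * ω₂ s + (1+ε)*(c*C) := by ring

lemma transfer_lo {c g B A C T : ℝ} {ω₁ ω₂ : ℝ → ℝ} (hc : 0 < c) (he : EquivC c ω₁ ω₂)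
    (hB : 1 < B) (hg : 0 < g) (hA : B < A) (hC : 0 ≤ C)
    (hlo : loB ω₁ g B A C T) :
    ∃ A' C' T', B < A' ∧ 0 ≤ C' ∧ loB ω₂ g B A' C' T' := by
  obtain ⟨ε, hε, hεB⟩ := eps_lt (by linarith : (0:ℝ) ≤ B) hA
  have hBg : (0:ℝ) < B ^ g := rpow_pos_of_pos (by linarith) g
  have hten : Tendsto (fun s : ℝ => B ^ g * s) atTop atTop :=
    Tendsto.const_mul_atTop hBg tendsto_id
  have hev : ∀ᶠ s in atTop,
      ((ω₂ s ≤ (1+ε) * (c * ω₁ s) ∧ c * ω₁ s ≤ (1+ε) * ω₂ s) ∧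
       (ω₂ (B^g*s) ≤ (1+ε) * (c * ω₁ (B^g*s)) ∧ c * ω₁ (B^g*s) ≤ (1+ε) * ω₂ (B^g*s))) ∧
      T ≤ s := ((he ε hε).and (hten.eventually (he ε hε))).and (eventually_ge_atTop T)
  rw [eventually_atTop] at hev
  obtain ⟨T', hT'⟩ := hev
  have hε1 : (0:ℝ) < 1 + ε := by linarith
  refine ⟨A / ((1+ε)*(1+ε)), c*C/(1+ε), T', ?_, by positivity, ?_⟩
  · rw [lt_div_iff₀ (by positivity)]; nlinarith
  intro s hs
  obtain ⟨⟨⟨h1, h2⟩, ⟨h3, h4⟩⟩, hTs⟩ := hT' s hs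
  -- ω₂(B^g s) ≥ c ω₁(B^g s)/(1+ε) ≥ (c(Aω₁ s − C))/(1+ε) ≥ (A ω₂ s/(1+ε) − cC)/(1+ε)
  have k1 : c * ω₁ (B^g*s) ≤ (1+ε) * ω₂ (B^g*s) := h4
  have k2 : A * (c * ω₁ s) - c * C ≤ c * ω₁ (B^g*s) := by
    have := hlo s hTs
    nlinarith
  have k3 : A * (ω₂ s / (1+ε)) ≤ A * (c * ω₁ s) := by
    apply mul_le_mul_of_nonneg_left _ (by linarith : (0:ℝ) ≤ A)
    rw [div_le_iff₀ hε1]; linarith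
  have : A * (ω₂ s / (1+ε)) - c*C ≤ (1+ε) * ω₂ (B^g*s) := by linarith
  have h5 : (A * (ω₂ s / (1+ε)) - c*C)/(1+ε) ≤ ω₂ (B^g*s) := by
    rw [div_le_iff₀ hε1]; linarith
  refine le_trans (le_of_eq ?_) h5
  field_simp

lemma up_of_gammaProp {ω : ℝ → ℝ} {g : ℝ} (hg : 0 < g)
    (hmono : MonotoneOn ω (Ici (0:ℝ))) (hpos : ∀ᶠ t in atTop, 0 < ω t)
    (h : gammaProp ω g) :
    ∃ B K C T, 1 < B ∧ 0 ≤ K ∧ K < B ∧ 0 ≤ C ∧ upB ω g B K C T := by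
  obtain ⟨K, hK, hlim⟩ := h
  obtain ⟨r, hr1, hr2⟩ := EReal.exists_between_coe_real hlim
  have hev := Filter.eventually_lt_of_limsup_lt hr1
  have hrK : r < K := by exact_mod_cast hr2
  set B := (max r 1 + K)/2 with hB
  have hB1 : 1 < B := by
    have : (1:ℝ) ≤ max r 1 := le_max_right _ _
    simp only [hB]; linarith
  have hBK : B < K := by
    have : max r 1 < K := max_lt hrK hK
    simp only [hB]; linarith
  obtain ⟨T, hT⟩ := eventually_atTop.mp ((hev.and hpos).and (eventually_ge_atTop (0:ℝ)))
  refine ⟨B, max r 0, 0, max T 0, hB1, le_max_right _ _, ?_, le_refl 0, ?_⟩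
  · have hrB : r < B := by
      have := le_max_left r 1
      simp only [hB]; linarith
    exact max_lt hrB (by linarith)
  intro s hs
  have hs0 : (0:ℝ) ≤ s := le_trans (le_max_right _ _) hs
  obtain ⟨⟨h1, h2⟩, h3⟩ := hT s (le_trans (le_max_left _ _) hs)
  have h1' : ω (K ^ g * s) / ω s < r := by exact_mod_cast h1
  have hKg : (0:ℝ) < K ^ g := rpow_pos_of_pos (by linarith) _
  have hBg : (0:ℝ) < B ^ g := rpow_pos_of_pos (by linarith) _
  have hmle : ω (B ^ g * s) ≤ ω (K ^ g * s) := by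
    apply hmono (mem_Ici.mpr (by positivity)) (mem_Ici.mpr (by positivity))
    apply mul_le_mul_of_nonneg_right _ hs0
    exact rpow_le_rpow (by linarith) (le_of_lt hBK) (le_of_lt hg)
  have : ω (K ^ g * s) < r * ω s := by
    rw [div_lt_iff₀ h2] at h1'; linarith
  calc ω (B ^ g * s) ≤ ω (K ^ g * s) := hmle
    _ ≤ r * ω s := le_of_lt this
    _ ≤ max r 0 * ω s + 0 := by
        rw [add_zero]
        exact mul_le_mul_of_nonneg_right (le_max_left _ _) (le_of_lt h2)

lemma lo_of_gammaBarProp {ω : ℝ → ℝ} {g : ℝ}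
    (hpos : ∀ᶠ t in atTop, 0 < ω t) (h : gammaBarProp ω g) :
    ∃ B A T, 1 < B ∧ B < A ∧ loB ω g B A 0 T := by
  obtain ⟨A, hA, hlim⟩ := h
  obtain ⟨r, hr1, hr2⟩ := EReal.exists_between_coe_real hlim
  have hev := Filter.eventually_lt_of_lt_liminf hr2
  have hAr : A < r := by exact_mod_cast hr1
  obtain ⟨T, hT⟩ := eventually_atTop.mp (hev.and hpos)
  refine ⟨A, r, T, hA, hAr, ?_⟩
  intro s hs
  obtain ⟨h1, h2⟩ := hT s hs
  have h1' : r < ω (A ^ g * s) / ω s := by exact_mod_cast h1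
  rw [lt_div_iff₀ h2] at h1'
  linarith

lemma up_global {ω : ℝ → ℝ} {g B K C T : ℝ} (hg : 0 < g) (hB : 1 < B)
    (hmono : MonotoneOn ω (Ici (0:ℝ))) (hnn : ∀ t, 0 ≤ t → 0 ≤ ω t)
    (hK : 0 ≤ K) (hC : 0 ≤ C) (h : upB ω g B K C T) :
    ∃ C', 0 ≤ C' ∧ ∀ s, 0 < s → ω (B ^ g * s) ≤ K * ω s + C' := by
  have hBg : (0:ℝ) < B ^ g := rpow_pos_of_pos (by linarith) _
  set T' := max T 1 with hT'
  refine ⟨C + ω (B ^ g * T'), ?_, ?_⟩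
  · have : 0 ≤ ω (B^g*T') := hnn _ (by positivity)
    linarith
  intro s hs
  rcases le_or_gt s T' with hle | hlt
  · have : ω (B ^ g * s) ≤ ω (B ^ g * T') := by
      apply hmono (mem_Ici.mpr (by positivity)) (mem_Ici.mpr (by positivity))
      exact mul_le_mul_of_nonneg_left hle (le_of_lt hBg)
    have h2 : 0 ≤ K * ω s := mul_nonneg hK (hnn _ (le_of_lt hs))
    linarith
  · have := h s (le_trans (le_max_left _ _) (le_of_lt hlt))
    have h2 : 0 ≤ ω (B^g*T') := hnn _ (by positivity)
    linarith

lemma lo_global {ω : ℝ → ℝ} {g B A C T : ℝ} (hg : 0 < g) (hB : 1 < B)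
    (hmono : MonotoneOn ω (Ici (0:ℝ))) (hnn : ∀ t, 0 ≤ t → 0 ≤ ω t)
    (hA : 0 ≤ A) (hC : 0 ≤ C) (h : loB ω g B A C T) :
    ∃ C', 0 ≤ C' ∧ ∀ s, 0 < s → A * ω s - C' ≤ ω (B ^ g * s) := by
  have hBg : (0:ℝ) < B ^ g := rpow_pos_of_pos (by linarith) _
  set T' := max T 1 with hT'
  refine ⟨C + A * ω T', ?_, ?_⟩
  · have : 0 ≤ ω T' := hnn _ (by positivity)
    have : 0 ≤ A * ω T' := mul_nonneg hA this
    linarith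
  intro s hs
  rcases le_or_gt s T' with hle | hlt
  · have h1 : ω s ≤ ω T' := hmono (le_of_lt hs) (mem_Ici.mpr (by positivity)) hle
    have h2 : 0 ≤ ω (B^g*s) := hnn _ (by positivity)
    nlinarith
  · have := h s (le_trans (le_max_left _ _) (le_of_lt hlt))
    have h2 : 0 ≤ ω T' := hnn _ (by positivity)
    nlinarith

lemma tauSet_eq (ω : ℝ → ℝ) (α t : ℝ) :
    lowerCompose ω α t = sInf {z : ℝ | ∃ u : ℝ, 0 < u ∧ z = ω (1/u^α) + t^(1/α) * u} := rfl

lemma tauSet_nonempty (ω : ℝ → ℝ) (α t : ℝ) :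
    {z : ℝ | ∃ u : ℝ, 0 < u ∧ z = ω (1/u^α) + t^(1/α) * u}.Nonempty :=
  ⟨ω (1/(1:ℝ)^α) + t^(1/α) * 1, 1, one_pos, rfl⟩

lemma tauSet_nn {ω : ℝ → ℝ} {α t : ℝ} (hα : 0 < α) (hnn : ∀ r, 0 < r → 0 ≤ ω r) (ht : 0 ≤ t) :
    ∀ z ∈ {z : ℝ | ∃ u : ℝ, 0 < u ∧ z = ω (1/u^α) + t^(1/α) * u}, 0 ≤ z := by
  rintro z ⟨u, hu, rfl⟩
  have h1 : (0:ℝ) < 1/u^α := by positivity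
  have h2 : (0:ℝ) ≤ t^(1/α) * u := mul_nonneg (rpow_nonneg ht _) hu.le
  have := hnn _ h1
  linarith

lemma tauSet_bdd {ω : ℝ → ℝ} {α t : ℝ} (hα : 0 < α) (hnn : ∀ r, 0 < r → 0 ≤ ω r) (ht : 0 ≤ t) :
    BddBelow {z : ℝ | ∃ u : ℝ, 0 < u ∧ z = ω (1/u^α) + t^(1/α) * u} :=
  ⟨0, fun z hz => tauSet_nn hα hnn ht z hz⟩

lemma tau_nonneg {ω : ℝ → ℝ} {α : ℝ} (hα : 0 < α) (hnn : ∀ r, 0 < r → 0 ≤ ω r)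
    {t : ℝ} (ht : 0 ≤ t) : 0 ≤ lowerCompose ω α t := by
  rw [tauSet_eq]
  exact le_csInf (tauSet_nonempty ω α t) (tauSet_nn hα hnn ht)

lemma tau_tendsto {ω : ℝ → ℝ} {α : ℝ} (hα : 0 < α) (hnn : ∀ r, 0 < r → 0 ≤ ω r)
    (htop : Tendsto ω atTop atTop) : Tendsto (lowerCompose ω α) atTop atTop := by
  rw [tendsto_atTop]
  intro M₀
  set M := max M₀ 0 with hM
  have hM0 : 0 ≤ M := le_max_right _ _
  obtain ⟨r₀, hr₀⟩ := eventually_atTop.mp ((tendsto_atTop.mp htop) M)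
  set r₁ := max r₀ 1 with hr₁
  have hr₁1 : (1:ℝ) ≤ r₁ := le_max_right _ _
  have hr₁0 : (0:ℝ) < r₁ := by linarith
  set u₀ := r₁ ^ (-(1/α)) with hu₀
  have hu₀0 : (0:ℝ) < u₀ := rpow_pos_of_pos hr₁0 _
  filter_upwards [eventually_ge_atTop ((M/u₀)^α), eventually_ge_atTop (1:ℝ)] with t ht1 ht2
  have ht0 : (0:ℝ) < t := by linarith
  refine le_trans (le_max_left M₀ 0) ?_
  rw [tauSet_eq]
  apply le_csInf (tauSet_nonempty ω α t)
  rintro z ⟨u, hu, rfl⟩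
  have hωnn : 0 ≤ ω (1/u^α) := hnn _ (by positivity)
  have htu : (0:ℝ) ≤ t^(1/α) * u := mul_nonneg (rpow_nonneg ht0.le _) hu.le
  rcases le_or_gt u u₀ with hle | hlt
  · -- ω part is large
    have harg : r₁ ≤ 1/u^α := by
      have h1 : u ^ α ≤ u₀ ^ α := rpow_le_rpow hu.le hle hα.le
      have h2 : u₀ ^ α = r₁⁻¹ := by
        rw [hu₀, ← rpow_mul hr₁0.le, neg_mul, one_div, inv_mul_cancel₀ hα.ne', rpow_neg_one]
      rw [h2] at h1
      rw [le_div_iff₀ (by positivity : (0:ℝ) < u^α)]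
      calc r₁ * u^α ≤ r₁ * r₁⁻¹ := mul_le_mul_of_nonneg_left h1 hr₁0.le
        _ = 1 := mul_inv_cancel₀ hr₁0.ne'
    have := hr₀ (1/u^α) (le_trans (le_max_left _ _) harg)
    linarith
  · -- linear part is large
    have h1 : M/u₀ ≤ t^(1/α) := by
      have := rpow_le_rpow (by positivity : (0:ℝ) ≤ (M/u₀)^α) ht1 (by positivity : (0:ℝ) ≤ 1/α)
      rwa [← rpow_mul (by positivity), mul_one_div, div_self hα.ne', rpow_one] at this
    have h2 : M ≤ t^(1/α) * u₀ := by
      rw [div_le_iff₀ hu₀0] at h1; linarith [mul_le_mul_of_nonneg_left hlt.le (rpow_nonneg ht0.le (1/α))]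
    have h3 : t^(1/α) * u₀ ≤ t^(1/α) * u := mul_le_mul_of_nonneg_left hlt.le (rpow_nonneg ht0.le _)
    linarith

/-- The substitution machinery: given `0 < B`, `0 < α` and `θ`, with
`c := B ^ ((θ*(g+α) - g)/α)` and `lam := c / (B^θ)^((g+α)/α)`, we have the identities. -/
lemma subst_facts {B α θ g : ℝ} (hB : 0 < B) (hα : 0 < α) :
    0 < B ^ ((θ*(g+α) - g)/α) / (B^θ) ^ ((g+α)/α) ∧
    (∀ u : ℝ, 0 < u →
      1 / (B ^ ((θ*(g+α) - g)/α) / (B^θ) ^ ((g+α)/α) * u) ^ α = B ^ g * (1/u^α)) ∧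
    (∀ t u : ℝ, 0 ≤ t →
      ((B^θ) ^ (g+α) * t) ^ (1/α) * (B ^ ((θ*(g+α) - g)/α) / (B^θ) ^ ((g+α)/α) * u)
        = B ^ ((θ*(g+α) - g)/α) * (t^(1/α) * u)) := by
  set c := B ^ ((θ*(g+α) - g)/α) with hc
  set D := (B^θ) ^ ((g+α)/α) with hD
  have hc0 : 0 < c := rpow_pos_of_pos hB _
  have hD0 : 0 < D := rpow_pos_of_pos (rpow_pos_of_pos hB _) _
  have hlam0 : 0 < c / D := div_pos hc0 hD0
  have hcα : c ^ α = B ^ (θ*(g+α) - g) := by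
    rw [hc, ← rpow_mul hB.le, div_mul_cancel₀ _ hα.ne']
  have hDα : D ^ α = B ^ (θ*(g+α)) := by
    rw [hD, ← rpow_mul (rpow_pos_of_pos hB θ).le, div_mul_cancel₀ _ hα.ne',
      ← rpow_mul hB.le]
  have hlamα : (c / D) ^ α = B ^ (-g) := by
    rw [div_rpow hc0.le hD0.le, hcα, hDα, ← rpow_sub hB]
    ring_nf
  refine ⟨hlam0, ?_, ?_⟩
  · intro u hu
    rw [mul_rpow hlam0.le hu.le, hlamα, rpow_neg hB.le]
    have h1 : (0:ℝ) < u ^ α := rpow_pos_of_pos hu _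
    have h2 : (0:ℝ) < B ^ g := rpow_pos_of_pos hB _
    field_simp
  · intro t u ht
    have h1 : ((B^θ) ^ (g+α) * t) ^ (1/α) = D * t^(1/α) := by
      rw [mul_rpow (rpow_pos_of_pos (rpow_pos_of_pos hB θ) _).le ht,
        hD, ← rpow_mul (rpow_pos_of_pos hB θ).le, mul_one_div]
    rw [h1]
    have : D * (c / D) = c := mul_div_cancel₀ c hD0.ne'
    calc D * t^(1/α) * (c/D * u) = D * (c/D) * (t^(1/α) * u) := by ring
      _ = c * (t^(1/α) * u) := by rw [this]

lemma theta_up {K B : ℝ} (hB : 1 < B) (hK : 0 ≤ K) (hKB : K < B) :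
    ∃ θ : ℝ, 0 < θ ∧ θ < 1 ∧ K < B ^ θ := by
  have hlB : 0 < Real.log B := Real.log_pos hB
  set K₁ := max K 1 with hK₁
  have hK₁1 : (1:ℝ) ≤ K₁ := le_max_right _ _
  have hK₁B : K₁ < B := max_lt hKB hB
  set q := Real.log K₁ / Real.log B with hq
  have hq0 : 0 ≤ q := div_nonneg (Real.log_nonneg hK₁1) hlB.le
  have hq1 : q < 1 := (div_lt_one hlB).mpr (Real.log_lt_log (by linarith) hK₁B)
  refine ⟨(q+1)/2, by linarith, by linarith, ?_⟩
  have h1 : K₁ < B ^ ((q+1)/2) := by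
    rw [rpow_def_of_pos (by linarith : (0:ℝ) < B)]
    have h2 : Real.log K₁ < Real.log B * ((q+1)/2) := by
      have : Real.log K₁ = Real.log B * q := by
        rw [hq, mul_div_cancel₀ _ hlB.ne']
      rw [this]
      have : q < (q+1)/2 := by linarith
      exact (mul_lt_mul_iff_right₀ hlB).mpr this
    calc K₁ = Real.exp (Real.log K₁) := (Real.exp_log (by linarith)).symm
      _ < Real.exp (Real.log B * ((q+1)/2)) := Real.exp_lt_exp.mpr h2
  exact lt_of_le_of_lt (le_max_left _ _) h1

lemma theta_lo {A B : ℝ} (hB : 1 < B) (hBA : B < A) :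
    ∃ θ : ℝ, 1 < θ ∧ B < B ^ θ ∧ B ^ θ < A := by
  have hlB : 0 < Real.log B := Real.log_pos hB
  set q := Real.log A / Real.log B with hq
  have hq1 : 1 < q := (one_lt_div hlB).mpr (Real.log_lt_log (by linarith) hBA)
  refine ⟨(1+q)/2, by linarith, ?_, ?_⟩
  · nth_rewrite 1 [← rpow_one B]
    exact rpow_lt_rpow_left_iff hB |>.mpr (by linarith)
  · rw [rpow_def_of_pos (by linarith : (0:ℝ) < B)]
    have h2 : Real.log B * ((1+q)/2) < Real.log A := by
      have hA : Real.log A = Real.log B * q := by rw [hq, mul_div_cancel₀ _ hlB.ne']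
      rw [hA]
      exact (mul_lt_mul_iff_right₀ hlB).mpr (by linarith)
    calc Real.exp (Real.log B * ((1+q)/2)) < Real.exp (Real.log A) := Real.exp_lt_exp.mpr h2
      _ = A := Real.exp_log (by linarith)

lemma gammaProp_tau {ω : ℝ → ℝ} {α g B K C : ℝ} (hα : 0 < α) (hg : 0 < g)
    (hB : 1 < B) (hK : 0 ≤ K) (hKB : K < B) (hC : 0 ≤ C)
    (hnn : ∀ r, 0 < r → 0 ≤ ω r)
    (hup : ∀ s, 0 < s → ω (B ^ g * s) ≤ K * ω s + C)
    (htau : Tendsto (lowerCompose ω α) atTop atTop) :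
    gammaProp (lowerCompose ω α) (g + α) := by
  obtain ⟨θ, hθ0, hθ1, hKθ⟩ := theta_up hB hK hKB
  set B' := B ^ θ with hB'
  have hB'1 : 1 < B' := Real.one_lt_rpow_iff_of_pos (by linarith) |>.mpr (Or.inl ⟨hB, hθ0⟩)
  set c := B ^ ((θ*(g+α) - g)/α) with hc
  set lam := c / B' ^ ((g+α)/α) with hlam
  obtain ⟨hlam0, hid1, hid2⟩ := subst_facts (B := B) (α := α) (θ := θ) (g := g)
    (by linarith) hα
  have hcB' : c < B' := by
    rw [hc, hB']
    apply Real.rpow_lt_rpow_of_exponent_lt hB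
    rw [div_lt_iff₀ hα]
    nlinarith
  set Kc := max K c with hKc
  have hKc0 : 0 < Kc := lt_of_lt_of_le (rpow_pos_of_pos (by linarith : (0:ℝ)<B) _) (le_max_right _ _)
  have hKcB' : Kc < B' := max_lt hKθ hcB'
  -- key pointwise inequality
  have hkey : ∀ t : ℝ, 0 < t →
      lowerCompose ω α (B' ^ (g+α) * t) ≤ Kc * lowerCompose ω α t + C := by
    intro t ht
    have hB't : (0:ℝ) < B' ^ (g+α) * t := by positivity
    have hmain : ∀ z ∈ {z : ℝ | ∃ u : ℝ, 0 < u ∧ z = ω (1/u^α) + t^(1/α) * u},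
        lowerCompose ω α (B' ^ (g+α) * t) ≤ Kc * z + C := by
      rintro z ⟨u, hu, rfl⟩
      have hmem : ω (1/(lam*u)^α) + (B' ^ (g+α) * t)^(1/α) * (lam*u) ∈
          {z : ℝ | ∃ u' : ℝ, 0 < u' ∧ z = ω (1/u'^α) + (B' ^ (g+α) * t)^(1/α) * u'} :=
        ⟨lam*u, by positivity, rfl⟩
      have hle := csInf_le (tauSet_bdd hα hnn hB't.le) hmem
      rw [tauSet_eq]
      refine le_trans hle ?_
      rw [hid1 u hu, hid2 t u ht.le]
      have h1 : ω (B^g * (1/u^α)) ≤ K * ω (1/u^α) + C := hup _ (by positivity)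
      have h2 : 0 ≤ ω (1/u^α) := hnn _ (by positivity)
      have h3 : (0:ℝ) ≤ t^(1/α) * u := mul_nonneg (rpow_nonneg ht.le _) hu.le
      have h4 : K * ω (1/u^α) ≤ Kc * ω (1/u^α) := mul_le_mul_of_nonneg_right (le_max_left _ _) h2
      have h5 : c * (t^(1/α) * u) ≤ Kc * (t^(1/α) * u) := mul_le_mul_of_nonneg_right (le_max_right _ _) h3
      calc ω (B^g * (1/u^α)) + c * (t^(1/α)*u) ≤ (K * ω (1/u^α) + C) + Kc * (t^(1/α)*u) := by linarith
        _ ≤ Kc * (ω (1/u^α) + t^(1/α)*u) + C := by linarith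
    -- conclude via le_csInf
    have h6 : (lowerCompose ω α (B' ^ (g+α) * t) - C)/Kc ≤ lowerCompose ω α t := by
      rw [tauSet_eq ω α t]
      apply le_csInf (tauSet_nonempty ω α t)
      intro z hz
      rw [div_le_iff₀ hKc0]
      have := hmain z hz
      nlinarith [hmain z hz]
    rw [div_le_iff₀ hKc0] at h6
    nlinarith
  -- conclude the limsup bound
  refine ⟨B', hB'1, ?_⟩
  set r := (Kc + B') / 2 with hr
  have hrB' : r < B' := by rw [hr]; linarith
  have hKcr : Kc < r := by rw [hr]; linarith
  set D := max 1 (C / (r - Kc)) with hD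
  have hD1 : (1:ℝ) ≤ D := le_max_left _ _
  have hCD : C ≤ (r - Kc) * D := by
    have h1 : C / (r - Kc) ≤ D := le_max_right _ _
    rw [div_le_iff₀ (by linarith : (0:ℝ) < r - Kc)] at h1
    linarith
  have hev : ∀ᶠ t : ℝ in atTop,
      ((lowerCompose ω α (B' ^ (g+α) * t) / lowerCompose ω α t : ℝ) : EReal) ≤ (r : EReal) := by
    filter_upwards [eventually_gt_atTop (0:ℝ), (tendsto_atTop.mp htau) D] with t ht hDt
    rw [EReal.coe_le_coe_iff]
    have hτpos : (0:ℝ) < lowerCompose ω α t := by linarith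
    rw [div_le_iff₀ hτpos]
    have := hkey t ht
    nlinarith
  calc limsup (fun t : ℝ => ((lowerCompose ω α (B' ^ (g+α) * t) / lowerCompose ω α t : ℝ) : EReal)) atTop
      ≤ (r : EReal) := limsup_le_of_le (by isBoundedDefault) hev
    _ < (B' : EReal) := by exact_mod_cast hrB'

lemma gammaBarProp_tau {ω : ℝ → ℝ} {α g B A C : ℝ} (hα : 0 < α) (hg : 0 < g)
    (hB : 1 < B) (hA : B < A) (hC : 0 ≤ C)
    (hnn : ∀ r, 0 < r → 0 ≤ ω r)
    (hlo : ∀ s, 0 < s → A * ω s - C ≤ ω (B ^ g * s))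
    (htau : Tendsto (lowerCompose ω α) atTop atTop) :
    gammaBarProp (lowerCompose ω α) (g + α) := by
  obtain ⟨θ, hθ1, hBθ, hθA⟩ := theta_lo hB hA
  set B' := B ^ θ with hB'
  have hB'1 : 1 < B' := by linarith
  set c := B ^ ((θ*(g+α) - g)/α) with hc
  set lam := c / B' ^ ((g+α)/α) with hlam
  obtain ⟨hlam0, hid1, hid2⟩ := subst_facts (B := B) (α := α) (θ := θ) (g := g)
    (by linarith) hα
  have hB'c : B' < c := by
    rw [hc, hB']
    apply Real.rpow_lt_rpow_of_exponent_lt hB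
    rw [lt_div_iff₀ hα]
    nlinarith
  set Ac := min A c with hAc
  have hB'Ac : B' < Ac := lt_min hθA hB'c
  have hAc0 : 0 < Ac := by
    have : (0:ℝ) < B' := by linarith
    linarith
  -- key pointwise inequality
  have hkey : ∀ t : ℝ, 0 < t →
      Ac * lowerCompose ω α t - C ≤ lowerCompose ω α (B' ^ (g+α) * t) := by
    intro t ht
    have hB't : (0:ℝ) < B' ^ (g+α) * t := by positivity
    rw [tauSet_eq ω α (B' ^ (g+α) * t)]
    apply le_csInf (tauSet_nonempty ω α (B' ^ (g+α) * t))
    rintro z ⟨u', hu', rfl⟩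
    -- write u' = lam * u
    set u := u' / lam with hu
    have hu0 : 0 < u := div_pos hu' hlam0
    have hu'eq : u' = lam * u := by rw [hu, mul_div_cancel₀ _ hlam0.ne']
    rw [hu'eq, hid1 u hu0, hid2 t u ht.le]
    have h1 : A * ω (1/u^α) - C ≤ ω (B^g * (1/u^α)) := hlo _ (by positivity)
    have h2 : 0 ≤ ω (1/u^α) := hnn _ (by positivity)
    have h3 : (0:ℝ) ≤ t^(1/α) * u := mul_nonneg (rpow_nonneg ht.le _) hu0.le
    have h4 : Ac * ω (1/u^α) ≤ A * ω (1/u^α) := mul_le_mul_of_nonneg_right (min_le_left _ _) h2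
    have h5 : Ac * (t^(1/α) * u) ≤ c * (t^(1/α) * u) := mul_le_mul_of_nonneg_right (min_le_right _ _) h3
    have h6 : lowerCompose ω α t ≤ ω (1/u^α) + t^(1/α) * u := by
      rw [tauSet_eq ω α t]
      exact csInf_le (tauSet_bdd hα hnn ht.le) ⟨u, hu0, rfl⟩
    have h7 : Ac * lowerCompose ω α t ≤ Ac * (ω (1/u^α) + t^(1/α) * u) :=
      mul_le_mul_of_nonneg_left h6 hAc0.le
    nlinarith
  refine ⟨B', hB'1, ?_⟩
  set r := (B' + Ac) / 2 with hr
  have hrB' : B' < r := by rw [hr]; linarith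
  have hrAc : r < Ac := by rw [hr]; linarith
  set D := max 1 (C / (Ac - r)) with hD
  have hD1 : (1:ℝ) ≤ D := le_max_left _ _
  have hCD : C ≤ (Ac - r) * D := by
    have h1 : C / (Ac - r) ≤ D := le_max_right _ _
    rw [div_le_iff₀ (by linarith : (0:ℝ) < Ac - r)] at h1
    linarith
  have hev : ∀ᶠ t : ℝ in atTop,
      (r : EReal) ≤ ((lowerCompose ω α (B' ^ (g+α) * t) / lowerCompose ω α t : ℝ) : EReal) := by
    filter_upwards [eventually_gt_atTop (0:ℝ), (tendsto_atTop.mp htau) D] with t ht hDt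
    rw [EReal.coe_le_coe_iff]
    have hτpos : (0:ℝ) < lowerCompose ω α t := by linarith
    rw [le_div_iff₀ hτpos]
    have := hkey t ht
    nlinarith
  calc (B' : EReal) < (r : EReal) := by exact_mod_cast hrB'
    _ ≤ liminf (fun t : ℝ => ((lowerCompose ω α (B' ^ (g+α) * t) / lowerCompose ω α t : ℝ) : EReal)) atTop :=
      le_liminf_of_le (by isBoundedDefault) hev

section Sigma
variable {σ : ℝ → ℝ} (hσ : IsW0 σ)

include hσ in
lemma sig_nonneg : ∀ t, 0 ≤ σ t := hσ.1.1
include hσ in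
lemma sig_mono : MonotoneOn σ (Ici (0:ℝ)) := hσ.1.2.1
include hσ in
lemma sig_tendsto : Tendsto σ atTop atTop := hσ.1.2.2
include hσ in
lemma sig_one : σ 1 = 0 := hσ.2.2.1 1 ⟨zero_le_one, le_refl 1⟩
include hσ in
lemma sig_logo : (fun t : ℝ => Real.log t) =o[atTop] σ := hσ.2.2.2.1
include hσ in
lemma sig_conv : ConvexOn ℝ univ (fun y : ℝ => σ (Real.exp y)) := hσ.2.2.2.2

lemma phiStar_set_ne (x : ℝ) :
    {z : ℝ | ∃ y : ℝ, 0 ≤ y ∧ z = x * y - σ (Real.exp y)}.Nonempty :=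
  ⟨x * 0 - σ (Real.exp 0), 0, le_refl 0, rfl⟩

include hσ in
lemma phiStar_set_bdd {x : ℝ} (hx : 0 ≤ x) :
    BddAbove {z : ℝ | ∃ y : ℝ, 0 ≤ y ∧ z = x * y - σ (Real.exp y)} := by
  have hc : (0:ℝ) < 1/(x+1) := by positivity
  obtain ⟨T, hT⟩ := eventually_atTop.mp ((sig_logo hσ).def hc)
  set T' := max T 1 with hT'
  have hT'1 : (1:ℝ) ≤ T' := le_max_right _ _
  refine ⟨x * Real.log T', ?_⟩
  rintro z ⟨y, hy, rfl⟩
  rcases le_or_gt T' (Real.exp y) with hle | hlt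
  · have h1 := hT (Real.exp y) (le_trans (le_max_left _ _) hle)
    rw [Real.log_exp] at h1
    have h2 : |y| ≤ 1/(x+1) * |σ (Real.exp y)| := h1
    rw [abs_of_nonneg hy, abs_of_nonneg (sig_nonneg hσ _)] at h2
    have h3 : (x+1) * y ≤ σ (Real.exp y) := by
      rw [div_mul_eq_mul_div, one_mul, le_div_iff₀ (by positivity)] at h2
      linarith [mul_comm y (x+1)]
    have h4 : 0 ≤ x * Real.log T' := mul_nonneg hx (Real.log_nonneg hT'1)
    nlinarith
  · have h1 : y < Real.log T' := by
      calc y = Real.log (Real.exp y) := (Real.log_exp y).symm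
        _ < Real.log T' := Real.log_lt_log (Real.exp_pos y) hlt
    have h2 : 0 ≤ σ (Real.exp y) := sig_nonneg hσ _
    nlinarith

include hσ in
lemma phiStar_ge {x y : ℝ} (hx : 0 ≤ x) (hy : 0 ≤ y) :
    x * y - σ (Real.exp y) ≤ phiStar σ x :=
  le_csSup (phiStar_set_bdd hσ hx) ⟨y, hy, rfl⟩

include hσ in
lemma phiStar_nonneg {x : ℝ} (hx : 0 ≤ x) : 0 ≤ phiStar σ x := by
  have := phiStar_ge hσ hx (le_refl 0)
  rwa [mul_zero, Real.exp_zero, sig_one hσ, sub_zero] at this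

include hσ in
lemma phiStar_mono {x x' : ℝ} (hx : 0 ≤ x) (hxx' : x ≤ x') : phiStar σ x ≤ phiStar σ x' := by
  apply csSup_le (phiStar_set_ne x)
  rintro z ⟨y, hy, rfl⟩
  calc x * y - σ (Real.exp y) ≤ x' * y - σ (Real.exp y) := by nlinarith
    _ ≤ phiStar σ x' := phiStar_ge hσ (le_trans hx hxx') hy

include hσ in
lemma phiStar_zero : phiStar σ 0 = 0 := by
  apply le_antisymm _ (phiStar_nonneg hσ (le_refl 0))
  apply csSup_le (phiStar_set_ne 0)
  rintro z ⟨y, hy, rfl⟩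
  have := sig_nonneg hσ (Real.exp y)
  linarith

variable {ℓ : ℝ} (hℓ : 0 < ℓ)

lemma assoc_pos (p : ℕ) : 0 < assocSeq σ ℓ p := Real.exp_pos _

include hσ hℓ in
lemma term_le {t : ℝ} (ht : 1 ≤ t) (p : ℕ) :
    Real.log (t ^ p / assocSeq σ ℓ p) ≤ σ t / ℓ := by
  have ht0 : (0:ℝ) < t := by linarith
  have hlt : 0 ≤ Real.log t := Real.log_nonneg ht
  have h1 : Real.log (t ^ p / assocSeq σ ℓ p)
      = p * Real.log t - (1/ℓ) * phiStar σ (ℓ * p) := by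
    rw [Real.log_div (by positivity) (ne_of_gt (assoc_pos p)), Real.log_pow,
      assocSeq, Real.log_exp]
  rw [h1]
  have h2 : ℓ * p * Real.log t - σ t ≤ phiStar σ (ℓ * p) := by
    have := phiStar_ge hσ (by positivity : (0:ℝ) ≤ ℓ * p) hlt
    rwa [Real.exp_log ht0] at this
  have h3 : (1/ℓ) * (ℓ * p * Real.log t - σ t) ≤ (1/ℓ) * phiStar σ (ℓ*p) :=
    mul_le_mul_of_nonneg_left h2 (by positivity)
  have h4 : (1/ℓ) * (ℓ * (p:ℝ) * Real.log t - σ t) = p * Real.log t - σ t / ℓ := by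
    field_simp
  rw [h4] at h3
  linarith

lemma omegaSeq_set_ne (M : ℕ → ℝ) (t : ℝ) :
    {z : ℝ | ∃ p : ℕ, z = Real.log (t ^ p / M p)}.Nonempty :=
  ⟨Real.log (t ^ 0 / M 0), 0, rfl⟩

include hσ hℓ in
lemma term_nonpos {t : ℝ} (ht0 : 0 ≤ t) (ht : t ≤ 1) (p : ℕ) :
    Real.log (t ^ p / assocSeq σ ℓ p) ≤ 0 := by
  rcases eq_or_lt_of_le ht0 with h0 | h0
  · rcases Nat.eq_zero_or_pos p with hp | hp
    · subst hp
      rw [← h0]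
      norm_num
      rw [assocSeq, Real.log_exp]
      exact mul_nonneg (by positivity) (phiStar_nonneg hσ (by positivity))
    · rw [← h0, zero_pow (Nat.pos_iff_ne_zero.mp hp), zero_div, Real.log_zero]
  · apply Real.log_nonpos (div_nonneg (pow_nonneg ht0 p) (assoc_pos p).le)
    rw [div_le_one (assoc_pos p)]
    calc t ^ p ≤ 1 := pow_le_one₀ ht0 ht
      _ ≤ assocSeq σ ℓ p := by
        rw [assocSeq, ← Real.exp_zero]
        exact Real.exp_le_exp.mpr (mul_nonneg (by positivity) (phiStar_nonneg hσ (by positivity)))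

include hσ hℓ in
lemma omegaSeq_set_bdd {t : ℝ} (ht : 0 ≤ t) :
    BddAbove {z : ℝ | ∃ p : ℕ, z = Real.log (t ^ p / assocSeq σ ℓ p)} := by
  rcases le_or_gt t 1 with hle | hlt
  · exact ⟨0, by rintro z ⟨p, rfl⟩; exact term_nonpos hσ hℓ ht hle p⟩
  · exact ⟨σ t / ℓ, by rintro z ⟨p, rfl⟩; exact term_le hσ hℓ hlt.le p⟩

include hσ hℓ in
lemma omegaSeq_ge_term {t : ℝ} (ht : 0 ≤ t) (p : ℕ) :
    Real.log (t ^ p / assocSeq σ ℓ p) ≤ omegaSeq (assocSeq σ ℓ) t :=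
  le_csSup (omegaSeq_set_bdd hσ hℓ ht) ⟨p, rfl⟩

include hσ hℓ in
lemma omegaSeq_nonneg {t : ℝ} (ht : 0 ≤ t) : 0 ≤ omegaSeq (assocSeq σ ℓ) t := by
  have h := omegaSeq_ge_term hσ hℓ ht 0
  have h0 : Real.log (t ^ 0 / assocSeq σ ℓ 0) = 0 := by
    rw [pow_zero, one_div, Real.log_inv, assocSeq, Real.log_exp, Nat.cast_zero, mul_zero,
      phiStar_zero hσ, mul_zero, neg_zero]
  rwa [h0] at h

include hσ hℓ in
lemma omegaSeq_le {t : ℝ} (ht : 1 ≤ t) : omegaSeq (assocSeq σ ℓ) t ≤ σ t / ℓ := by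
  apply csSup_le (omegaSeq_set_ne _ t)
  rintro z ⟨p, rfl⟩
  exact term_le hσ hℓ ht p

include hσ hℓ in
lemma omegaSeq_mono : MonotoneOn (omegaSeq (assocSeq σ ℓ)) (Ici (0:ℝ)) := by
  rintro t₁ (ht₁ : (0:ℝ) ≤ t₁) t₂ (ht₂ : (0:ℝ) ≤ t₂) h12
  rcases le_or_gt t₁ 1 with hle | hlt
  · have h1 : omegaSeq (assocSeq σ ℓ) t₁ ≤ 0 :=
      csSup_le (omegaSeq_set_ne _ t₁) (by rintro z ⟨p, rfl⟩; exact term_nonpos hσ hℓ ht₁ hle p)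
    exact le_trans h1 (omegaSeq_nonneg hσ hℓ ht₂)
  · apply csSup_le (omegaSeq_set_ne _ t₁)
    rintro z ⟨p, rfl⟩
    refine le_trans ?_ (omegaSeq_ge_term hσ hℓ ht₂ p)
    have hpow : t₁ ^ p ≤ t₂ ^ p := pow_le_pow_left₀ ht₁ h12 p
    have hq : t₁ ^ p / assocSeq σ ℓ p ≤ t₂ ^ p / assocSeq σ ℓ p :=
      (div_le_div_iff_of_pos_right (assoc_pos p)).mpr hpow
    exact Real.log_le_log (div_pos (pow_pos (by linarith) p) (assoc_pos p)) hq

include hσ in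
lemma exists_support (y₀ : ℝ) :
    ∃ x₀ : ℝ, 0 ≤ x₀ ∧ ∀ y : ℝ, σ (Real.exp y₀) + x₀ * (y - y₀) ≤ σ (Real.exp y) := by
  set φ : ℝ → ℝ := fun y => σ (Real.exp y) with hφ
  have hconv := sig_conv hσ
  have hmono : ∀ a b : ℝ, a ≤ b → φ a ≤ φ b := by
    intro a b hab
    exact sig_mono hσ (mem_Ici.mpr (Real.exp_pos a).le) (mem_Ici.mpr (Real.exp_pos b).le)
      (Real.exp_le_exp.mpr hab)
  set Sl := (fun z => (φ z - φ y₀)/(z - y₀)) '' Ioi y₀ with hSl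
  have hne : Sl.Nonempty := ⟨_, ⟨y₀ + 1, by simp, rfl⟩⟩
  have hlb : ∀ w ∈ Sl, 0 ≤ w := by
    rintro w ⟨z, hz, rfl⟩
    have hz' : y₀ < z := hz
    apply div_nonneg _ (by linarith)
    have := hmono y₀ z hz'.le
    linarith
  have hbdd : BddBelow Sl := ⟨0, hlb⟩
  refine ⟨sInf Sl, le_csInf hne hlb, ?_⟩
  intro y
  rcases lt_trichotomy y y₀ with hy | hy | hy
  · -- slope (y, y₀) ≤ all slopes (y₀, z)
    have hslope : (φ y₀ - φ y)/(y₀ - y) ≤ sInf Sl := by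
      apply le_csInf hne
      rintro w ⟨z, hz, rfl⟩
      exact hconv.slope_mono_adjacent (mem_univ y) (mem_univ z) hy hz
    have h2 : (φ y₀ - φ y)/(y₀ - y) * (y₀ - y) = φ y₀ - φ y :=
      div_mul_cancel₀ _ (by linarith : y₀ - y ≠ 0)
    have h4 := mul_le_mul_of_nonneg_right hslope (by linarith : (0:ℝ) ≤ y₀ - y)
    rw [h2] at h4
    nlinarith
  · subst hy; simp
  · have h1 : sInf Sl ≤ (φ y - φ y₀)/(y - y₀) := csInf_le hbdd ⟨y, hy, rfl⟩
    have h2 := mul_le_mul_of_nonneg_right h1 (by linarith : (0:ℝ) ≤ y - y₀)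
    have h3 : (φ y - φ y₀)/(y - y₀) * (y - y₀) = φ y - φ y₀ :=
      div_mul_cancel₀ _ (by linarith : y - y₀ ≠ 0)
    rw [h3] at h2
    nlinarith

include hσ hℓ in
lemma sandwich_lower {t : ℝ} (ht : 1 ≤ t) :
    σ t ≤ ℓ * omegaSeq (assocSeq σ ℓ) t + ℓ * Real.log t := by
  have ht0 : (0:ℝ) < t := by linarith
  set y₀ := Real.log t with hy₀
  have hy₀0 : 0 ≤ y₀ := Real.log_nonneg ht
  obtain ⟨x₀, hx₀, hsup⟩ := exists_support hσ y₀
  have hey₀ : Real.exp y₀ = t := Real.exp_log ht0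
  rw [hey₀] at hsup
  have hφx₀ : phiStar σ x₀ ≤ x₀ * y₀ - σ t := by
    apply csSup_le (phiStar_set_ne x₀)
    rintro z ⟨y, hy, rfl⟩
    have := hsup y
    nlinarith
  set p := ⌊x₀/ℓ⌋₊ with hp
  have hp1 : (p:ℝ) ≤ x₀/ℓ := Nat.floor_le (by positivity)
  have hp2 : x₀/ℓ < p + 1 := Nat.lt_floor_add_one _
  have hp1' : ℓ * p ≤ x₀ := by
    have := (le_div_iff₀ hℓ).mp hp1
    linarith
  have hp2' : x₀ < ℓ * (p+1) := by
    have := (div_lt_iff₀ hℓ).mp hp2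
    linarith
  have hφp : phiStar σ (ℓ*p) ≤ x₀ * y₀ - σ t :=
    le_trans (phiStar_mono hσ (by positivity) hp1') hφx₀
  have hterm : (p:ℝ) * y₀ - (1/ℓ) * phiStar σ (ℓ*p) ≤ omegaSeq (assocSeq σ ℓ) t := by
    have h1 : Real.log (t ^ p / assocSeq σ ℓ p)
        = p * y₀ - (1/ℓ) * phiStar σ (ℓ * p) := by
      rw [Real.log_div (by positivity) (ne_of_gt (assoc_pos p)), Real.log_pow,
        assocSeq, Real.log_exp, hy₀]
    rw [← h1]
    exact omegaSeq_ge_term hσ hℓ ht0.le p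
  have h2 : ℓ * ((p:ℝ) * y₀ - (1/ℓ) * phiStar σ (ℓ*p)) ≤ ℓ * omegaSeq (assocSeq σ ℓ) t :=
    mul_le_mul_of_nonneg_left hterm hℓ.le
  have h3 : ℓ * ((p:ℝ) * y₀ - (1/ℓ) * phiStar σ (ℓ*p)) = ℓ * p * y₀ - phiStar σ (ℓ*p) := by
    field_simp
  rw [h3] at h2
  nlinarith [phiStar_nonneg hσ (show (0:ℝ) ≤ ℓ*p by positivity)]

include hσ hℓ in
lemma omegaSeq_tendsto : Tendsto (omegaSeq (assocSeq σ ℓ)) atTop atTop := by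
  have hhalf : (0:ℝ) < 1/(2*ℓ) := by positivity
  have hdiv : Tendsto (fun t => σ t / (2*ℓ)) atTop atTop :=
    (sig_tendsto hσ).atTop_div_const (by positivity)
  apply tendsto_atTop_mono' atTop _ hdiv
  filter_upwards [eventually_atTop.mpr ⟨1, fun t (ht : (1:ℝ) ≤ t) => ht⟩,
      (sig_logo hσ).def hhalf] with t ht hlog
  have ht0 : (0:ℝ) < t := by linarith
  have h1 := sandwich_lower hσ hℓ ht
  have h2 : Real.log t ≤ 1/(2*ℓ) * σ t := by
    calc Real.log t ≤ |Real.log t| := le_abs_self _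
      _ ≤ 1/(2*ℓ) * |σ t| := hlog
      _ = 1/(2*ℓ) * σ t := by rw [abs_of_nonneg (sig_nonneg hσ t)]
  have h3 : ℓ * Real.log t ≤ σ t / 2 := by
    rw [div_eq_mul_inv]
    calc ℓ * Real.log t ≤ ℓ * (1/(2*ℓ) * σ t) := mul_le_mul_of_nonneg_left h2 hℓ.le
      _ = σ t * 2⁻¹ := by field_simp
  have h4 : σ t / 2 ≤ ℓ * omegaSeq (assocSeq σ ℓ) t := by linarith
  rw [div_le_iff₀ (by positivity : (0:ℝ) < 2*ℓ)]
  calc σ t = 2 * (σ t / 2) := by ring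
    _ ≤ 2 * (ℓ * omegaSeq (assocSeq σ ℓ) t) := by linarith
    _ = omegaSeq (assocSeq σ ℓ) t * (2*ℓ) := by ring

include hσ hℓ in
lemma equiv_sig : EquivC ℓ (omegaSeq (assocSeq σ ℓ)) σ := by
  intro ε hε
  have hδ : (0:ℝ) < (ε/(1+ε))/ℓ := by positivity
  filter_upwards [eventually_atTop.mpr ⟨1, fun t (ht : (1:ℝ) ≤ t) => ht⟩,
    (sig_logo hσ).def hδ] with s hs hlog
  have hs0 : (0:ℝ) < s := by linarith
  have h1 := sandwich_lower hσ hℓ hs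
  have h2 := omegaSeq_le hσ hℓ hs
  have h3 : ℓ * omegaSeq (assocSeq σ ℓ) s ≤ σ s := by
    rw [div_eq_mul_inv] at h2
    have := mul_le_mul_of_nonneg_left h2 hℓ.le
    calc ℓ * omegaSeq (assocSeq σ ℓ) s ≤ ℓ * (σ s * ℓ⁻¹) := this
      _ = σ s := by field_simp
  constructor
  · -- σ s ≤ (1+ε) * (ℓ * ω s)
    have h4 : Real.log s ≤ (ε/(1+ε))/ℓ * σ s := by
      calc Real.log s ≤ |Real.log s| := le_abs_self _
        _ ≤ (ε/(1+ε))/ℓ * |σ s| := hlog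
        _ = (ε/(1+ε))/ℓ * σ s := by rw [abs_of_nonneg (sig_nonneg hσ s)]
    have h5 : ℓ * Real.log s ≤ (ε/(1+ε)) * σ s := by
      have := mul_le_mul_of_nonneg_left h4 hℓ.le
      calc ℓ * Real.log s ≤ ℓ * ((ε/(1+ε))/ℓ * σ s) := this
        _ = (ε/(1+ε)) * σ s := by field_simp
    have h6 : (1 - ε/(1+ε)) * σ s ≤ ℓ * omegaSeq (assocSeq σ ℓ) s := by nlinarith
    have h7 : (1 - ε/(1+ε)) * (1+ε) = 1 := by field_simp; ring
    nlinarith [sig_nonneg hσ s]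
  · -- ℓ * ω s ≤ (1+ε) σ s
    nlinarith [sig_nonneg hσ s]

end Sigma

section Chain
variable {σ : ℝ → ℝ} (hσ : IsW0 σ)

include hσ in
lemma up_sigma_tau {ℓ₁ α g : ℝ} (hℓ₁ : 0 < ℓ₁) (hα : 0 < α) (hg : 0 < g)
    {B K C T : ℝ} (hB : 1 < B) (hK : 0 ≤ K) (hKB : K < B) (hC : 0 ≤ C)
    (hup : upB σ g B K C T) :
    gammaProp (lowerCompose (omegaSeq (assocSeq σ ℓ₁)) α) (g + α) := by
  have e2 : EquivC ℓ₁⁻¹ σ (omegaSeq (assocSeq σ ℓ₁)) := equivC_symm hℓ₁ (equiv_sig hσ hℓ₁)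
  obtain ⟨K', C', T', hK'0, hK'B, hC'0, hup'⟩ :=
    transfer_up (inv_pos.mpr hℓ₁) e2 hB hg hK hKB hC hup
  obtain ⟨C'', hC''0, hg'⟩ := up_global hg hB (omegaSeq_mono hσ hℓ₁)
    (fun t ht => omegaSeq_nonneg hσ hℓ₁ ht) hK'0 hC'0 hup'
  exact gammaProp_tau hα hg hB hK'0 hK'B hC''0
    (fun r hr => omegaSeq_nonneg hσ hℓ₁ hr.le) hg'
    (tau_tendsto hα (fun r hr => omegaSeq_nonneg hσ hℓ₁ hr.le) (omegaSeq_tendsto hσ hℓ₁))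

include hσ in
lemma main_up {ℓ ℓ₁ α g : ℝ} (hℓ : 0 < ℓ) (hℓ₁ : 0 < ℓ₁) (hα : 0 < α) (hg : 0 < g)
    (h : gammaProp (omegaSeq (assocSeq σ ℓ)) g) :
    gammaProp (lowerCompose (omegaSeq (assocSeq σ ℓ₁)) α) (g + α) := by
  obtain ⟨B, K, C, T, hB, hK, hKB, hC, hup⟩ := up_of_gammaProp hg (omegaSeq_mono hσ hℓ)
    ((omegaSeq_tendsto hσ hℓ).eventually_gt_atTop 0) h
  obtain ⟨K', C', T', hK'0, hK'B, hC'0, hupσ⟩ :=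
    transfer_up hℓ (equiv_sig hσ hℓ) hB hg hK hKB hC hup
  exact up_sigma_tau hσ hℓ₁ hα hg hB hK'0 hK'B hC'0 hupσ

include hσ in
lemma main_up_sigma {ℓ₁ α g : ℝ} (hℓ₁ : 0 < ℓ₁) (hα : 0 < α) (hg : 0 < g)
    (h : gammaProp σ g) :
    gammaProp (lowerCompose (omegaSeq (assocSeq σ ℓ₁)) α) (g + α) := by
  obtain ⟨B, K, C, T, hB, hK, hKB, hC, hup⟩ := up_of_gammaProp hg (sig_mono hσ)
    ((sig_tendsto hσ).eventually_gt_atTop 0) h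
  exact up_sigma_tau hσ hℓ₁ hα hg hB hK hKB hC hup

include hσ in
lemma main_lo {ℓ ℓ₁ α g : ℝ} (hℓ : 0 < ℓ) (hℓ₁ : 0 < ℓ₁) (hα : 0 < α) (hg : 0 < g)
    (h : gammaBarProp (omegaSeq (assocSeq σ ℓ₁)) g) :
    gammaBarProp (lowerCompose (omegaSeq (assocSeq σ ℓ)) α) (g + α) := by
  obtain ⟨B, A, T, hB, hBA, hlo⟩ := lo_of_gammaBarProp
    ((omegaSeq_tendsto hσ hℓ₁).eventually_gt_atTop 0) h
  obtain ⟨A', C', T', hBA', hC'0, hloσ⟩ :=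
    transfer_lo hℓ₁ (equiv_sig hσ hℓ₁) hB hg hBA (le_refl 0) hlo
  obtain ⟨A'', C'', T'', hBA'', hC''0, hloω⟩ :=
    transfer_lo (inv_pos.mpr hℓ) (equivC_symm hℓ (equiv_sig hσ hℓ)) hB hg hBA' hC'0 hloσ
  obtain ⟨C₃, hC₃0, hglo⟩ := lo_global hg hB (omegaSeq_mono hσ hℓ)
    (fun t ht => omegaSeq_nonneg hσ hℓ ht) (by linarith : (0:ℝ) ≤ A'') hC''0 hloω
  exact gammaBarProp_tau hα hg hB hBA'' hC₃0
    (fun r hr => omegaSeq_nonneg hσ hℓ hr.le) hglo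
    (tau_tendsto hα (fun r hr => omegaSeq_nonneg hσ hℓ hr.le) (omegaSeq_tendsto hσ hℓ))

end Chain

theorem stmt2 (σ : ℝ → ℝ) (hσ : IsW0 σ) :
    (0 < gammaIdx σ →
      ∀ ℓ : ℝ, 0 < ℓ → ∀ ℓ₁ : ℝ, 0 < ℓ₁ → ∀ α : ℝ, 0 < α →
        gammaIdx (omegaSeq (assocSeq σ ℓ)) + ENNReal.ofReal α
          ≤ gammaIdx (lowerCompose (omegaSeq (assocSeq σ ℓ₁)) α)) ∧
    (gammaBarIdx σ < ⊤ →
      ∀ ℓ : ℝ, 0 < ℓ → ∀ ℓ₁ : ℝ, 0 < ℓ₁ → ∀ α : ℝ, 0 < α →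
        gammaBarIdx (lowerCompose (omegaSeq (assocSeq σ ℓ)) α)
          ≤ gammaBarIdx (omegaSeq (assocSeq σ ℓ₁)) + ENNReal.ofReal α) := by
  constructor
  · intro h0 ℓ hℓ ℓ₁ hℓ₁ α hα
    -- from `0 < gammaIdx σ` extract an admissible exponent for `σ`
    obtain ⟨g₀, hg₀⟩ := lt_iSup_iff.mp h0
    have hP₀ : 0 < g₀ ∧ gammaProp σ g₀ := by
      by_contra hP
      rw [iSup_neg hP] at hg₀
      exact lt_irrefl _ hg₀
    have hbase : ENNReal.ofReal α ≤ gammaIdx (lowerCompose (omegaSeq (assocSeq σ ℓ₁)) α) := by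
      have hτ : gammaProp (lowerCompose (omegaSeq (assocSeq σ ℓ₁)) α) (g₀ + α) :=
        main_up_sigma hσ hℓ₁ hα hP₀.1 hP₀.2
      calc ENNReal.ofReal α ≤ ENNReal.ofReal (g₀ + α) :=
            ENNReal.ofReal_le_ofReal (by linarith [hP₀.1])
        _ ≤ gammaIdx (lowerCompose (omegaSeq (assocSeq σ ℓ₁)) α) := by
            rw [gammaIdx]
            apply le_iSup_of_le (g₀ + α)
            rw [iSup_pos ⟨by linarith [hP₀.1], hτ⟩]
    rw [gammaIdx, ENNReal.iSup_add]
    apply iSup_le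
    intro g
    by_cases hP : 0 < g ∧ gammaProp (omegaSeq (assocSeq σ ℓ)) g
    · rw [iSup_pos hP, ← ENNReal.ofReal_add hP.1.le hα.le]
      have hτ : gammaProp (lowerCompose (omegaSeq (assocSeq σ ℓ₁)) α) (g + α) :=
        main_up hσ hℓ hℓ₁ hα hP.1 hP.2
      rw [gammaIdx]
      apply le_iSup_of_le (g + α)
      rw [iSup_pos ⟨by linarith [hP.1], hτ⟩]
    · rw [iSup_neg hP]
      simpa using hbase
  · intro _ ℓ hℓ ℓ₁ hℓ₁ α hα
    rw [show gammaBarIdx (omegaSeq (assocSeq σ ℓ₁)) = sInf (ENNReal.ofReal ''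
        {g : ℝ | 0 < g ∧ gammaBarProp (omegaSeq (assocSeq σ ℓ₁)) g}) from rfl,
      ENNReal.sInf_add]
    apply le_iInf₂
    rintro b ⟨g, ⟨hg, hbar⟩, rfl⟩
    have hτ : gammaBarProp (lowerCompose (omegaSeq (assocSeq σ ℓ)) α) (g + α) :=
      main_lo hσ hℓ hℓ₁ hα hg hbar
    calc gammaBarIdx (lowerCompose (omegaSeq (assocSeq σ ℓ)) α)
        ≤ ENNReal.ofReal (g + α) :=
          sInf_le (⟨g + α, ⟨by linarith, hτ⟩, rfl⟩ : ENNReal.ofReal (g+α) ∈ ENNReal.ofReal ''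
            {g' : ℝ | 0 < g' ∧ gammaBarProp (lowerCompose (omegaSeq (assocSeq σ ℓ)) α) g'})
      _ = ENNReal.ofReal g + ENNReal.ofReal α := ENNReal.ofReal_add hg.le hα.le
end
end
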